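/- arXiv:1112.1181 — 7 statements merged into one kernel-verified Lean document; each statement's English description precedes it below -/
import Mathlib

section
/- If the MQMS system is strongly stable under some server allocation policy and the time-average arrival rate vector Ā = lim_{t→∞} (1/t) Σ_{τ=1}^t E[A(τ)] exists, then Ā lies in the downward closure of the achievable-rate polytope P: there exists y ∈ P with Ā_n ≤ y_n for every n = 1,…,N. -/
open MeasureTheory ProbabilityTheory Finset Filter

noncomputable section

/-- Channel state space `S`: N×K matrices with entries in {0,…,M}. -/
abbrev ChanState (N K M : ℕ) := Fin N → Fin K → Fin (M + 1)

/-- The real-valued channel matrix `C_s` of a channel state `s`. -/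
def Cmat {N K M : ℕ} (s : ChanState N K M) : Fin N → Fin K → ℝ :=
  fun n k => ((s n k : ℕ) : ℝ)

/-- The 0/1 allocation matrix `I ∈ 𝓘` determined by an assignment `f` of servers to
queues: column `k` has its single 1 in row `f k`. -/
def allocMat {N K : ℕ} (f : Fin K → Fin N) : Fin N → Fin K → ℝ :=
  fun n k => if f k = n then 1 else 0

/-- The weight `Σ_n Σ_k α_n c_{n,k} I_{n,k}` of the allocation matrix `I = allocMat f`. -/
def weight {N K : ℕ} (α : Fin N → ℝ) (c : Fin N → Fin K → ℝ) (f : Fin K → Fin N) : ℝ :=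
  ∑ n, ∑ k, α n * c n k * allocMat f n k

/-- `max_{I ∈ 𝓘} Σ_n Σ_k α_n c_{n,k} I_{n,k}`. -/
def maxWeight {N K : ℕ} [NeZero N] (α : Fin N → ℝ) (c : Fin N → Fin K → ℝ) : ℝ :=
  Finset.univ.sup' Finset.univ_nonempty (weight α c)

/-- `b(α) = Σ_{s∈S} π_s max_{I∈𝓘} Σ_n Σ_k α_n (C_s)_{n,k} I_{n,k}`. -/
def bCoef {N K M : ℕ} [NeZero N] (π : ChanState N K M → ℝ) (α : Fin N → ℝ) : ℝ :=
  ∑ s : ChanState N K M, π s * maxWeight α (Cmat s)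

/-- The rate vector `R^{(g)}` of the deterministic policy `g`. -/
def rateVec {N K M : ℕ} (π : ChanState N K M → ℝ)
    (g : ChanState N K M → Fin K → Fin N) : Fin N → ℝ :=
  fun n => ∑ s : ChanState N K M, π s * ∑ k, Cmat s n k * allocMat (g s) n k

/-- The achievable-rate polytope `P`, the convex hull of the rate vectors of the
deterministic policies. -/
def ratePolytope {N K M : ℕ} (π : ChanState N K M → ℝ) : Set (Fin N → ℝ) :=
  convexHull ℝ {r | ∃ g : ChanState N K M → Fin K → Fin N, r = rateVec π g}

/-- `W`: products of N−1 factors from {0,…,M}, viewed inside ℝ. -/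
def Wset (N M : ℕ) : Set ℝ :=
  {w | ∃ m : Fin (N - 1) → ℕ, (∀ j, m j ≤ M) ∧ w = ∏ j, (m j : ℝ)}

/-- The set `V` of nonnegative weight vectors from the paper. -/
def Vset (N M : ℕ) : Set (Fin N → ℝ) :=
  {α | (∀ n, 0 ≤ α n) ∧
    ∀ U : Finset (Fin N), U.Nonempty → U ≠ Finset.univ →
      (∃ i ∈ U, α i ≠ 0) → (∃ j ∈ Uᶜ, α j ≠ 0) →
      ∃ i ∈ U, ∃ j ∈ Uᶜ, ∃ m ∈ Finset.Icc 1 M, ∃ n ∈ Finset.Icc 1 M,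
        0 < α i ∧ 0 < α j ∧ α i * (m : ℝ) = α j * (n : ℝ)}

/-- The product Bernoulli distribution on ON-OFF (M = 1) channel states. -/
def bernoulliPi {N K : ℕ} (p : Fin N → Fin K → ℝ) : ChanState N K 1 → ℝ :=
  fun s => ∏ n, ∏ k, (if (s n k : ℕ) = 1 then p n k else 1 - p n k)

end

/-!
In every slot the expected service vector of an arbitrary policy lies in `P`: grouping the
outcomes by the channel state `s`, the joint law of channel state and allocation mixes, for each
`s`, the service vectors of the allocations with total weight `π s`, and such state-wise mixtures
are convex combinations of rates of deterministic policies. Integrating the queue recursion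
`X(t) ≥ X(t-1) - service(t) + A(t)` shows that the expected arrivals up to `t` are at most the
expected services up to `t` plus `E X(t)`. Strong stability makes `E X(t) / t` small along
infinitely many `t`; along a further subsequence the time-averaged service vectors converge in
the compact polytope `P`, and the limit dominates `Ā`.
-/

open Topology

section ConvexCombination

variable {E : Type*} [AddCommGroup E] [Module ℝ E]

theorem exists_mem_convexHull_sum_smul_eq {β : Type*} [Fintype β] [Nonempty β] {w : β → ℝ}
    (hw : ∀ b, 0 ≤ w b) (z : β → E) :
    ∃ x ∈ convexHull ℝ (Set.range z), ∑ b, w b • z b = (∑ b, w b) • x := by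
  rcases (sum_nonneg fun b _ => hw b : 0 ≤ ∑ b, w b).eq_or_lt with hzero | hpos
  · have hw0 : ∀ b, w b = 0 := fun b =>
      (sum_eq_zero_iff_of_nonneg fun b _ => hw b).1 hzero.symm b (mem_univ b)
    refine ⟨z (Classical.arbitrary β), subset_convexHull ℝ _ (Set.mem_range_self _), ?_⟩
    simp [hw0]
  · refine ⟨univ.centerMass w z,
      univ.centerMass_mem_convexHull (fun b _ => hw b) hpos fun b _ => Set.mem_range_self b, ?_⟩
    rw [Finset.centerMass, smul_inv_smul₀ hpos.ne']

theorem sum_sum_smul_mem_convexHull {α β : Type*} [Fintype α] [Fintype β] [Nonempty β]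
    {w : α → β → ℝ} (hw : ∀ a b, 0 ≤ w a b) (v : α → β → E) :
    ∑ a, ∑ b, w a b • v a b ∈
      convexHull ℝ (Set.range fun g : α → β => ∑ a, (∑ b, w a b) • v a (g a)) := by
  choose x hx hxw using fun a => exists_mem_convexHull_sum_smul_eq (hw a) (v a)
  let L : (α → E) →ₗ[ℝ] E := ∑ a, (∑ b, w a b) • LinearMap.proj a
  have hL : ∀ y, L y = ∑ a, (∑ b, w a b) • y a := fun y => by simp [L]
  have hxL : L x ∈ L '' convexHull ℝ (Set.univ.pi fun a => Set.range (v a)) :=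
    Set.mem_image_of_mem L (mem_convexHull_pi fun a _ => hx a)
  rw [L.image_convexHull] at hxL
  rw [sum_congr rfl fun a _ => hxw a, ← hL]
  refine convexHull_mono ?_ hxL
  rintro _ ⟨y, hy, rfl⟩
  choose g hg using fun a => hy a (Set.mem_univ a)
  exact ⟨g, by simp only [hL, hg]⟩

end ConvexCombination

section RatePolytope

variable {N K M : ℕ}

def serviceVec (s : ChanState N K M) (f : Fin K → Fin N) : Fin N → ℝ :=
  fun n => ∑ k, Cmat s n k * allocMat f n k

theorem rateVec_eq_sum_smul (π : ChanState N K M → ℝ) (g : ChanState N K M → Fin K → Fin N) :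
    rateVec π g = ∑ s, π s • serviceVec s (g s) := by
  ext n
  simp [rateVec, serviceVec, Finset.sum_apply]

theorem mem_ratePolytope_of_sum_eq [Nonempty (Fin K → Fin N)] {π : ChanState N K M → ℝ}
    {w : ChanState N K M → (Fin K → Fin N) → ℝ} (hw : ∀ s f, 0 ≤ w s f)
    (hwπ : ∀ s, ∑ f, w s f = π s) :
    ∑ s, ∑ f, w s f • serviceVec s f ∈ ratePolytope π := by
  refine convexHull_mono ?_ (sum_sum_smul_mem_convexHull hw serviceVec)
  rintro _ ⟨g, rfl⟩
  exact ⟨g, by simp only [rateVec_eq_sum_smul, hwπ]⟩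

theorem isCompact_ratePolytope (π : ChanState N K M → ℝ) : IsCompact (ratePolytope π) :=
  Set.Finite.isCompact_convexHull ℝ <|
    (Set.finite_range (rateVec π)).subset <| by rintro _ ⟨g, rfl⟩; exact ⟨g, rfl⟩

end RatePolytope

section FiniteValued

variable {Ω β : Type*} [MeasurableSpace Ω] {μ : Measure Ω} [IsFiniteMeasure μ]
  [Fintype β] [MeasurableSpace β] [MeasurableSingletonClass β] {g : Ω → β}

theorem integrable_comp_of_fintype (hg : Measurable g) (h : β → ℝ) :
    Integrable (fun ω => h (g ω)) μ :=
  Integrable.of_finite.comp_measurable hg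

theorem integral_comp_eq_sum_measureReal (hg : Measurable g) (h : β → ℝ) :
    ∫ ω, h (g ω) ∂μ = ∑ b, μ.real (g ⁻¹' {b}) * h b := by
  rw [← integral_map hg.aemeasurable (Integrable.of_finite (f := h)).aestronglyMeasurable,
    integral_fintype Integrable.of_finite]
  simp [map_measureReal_apply hg (measurableSet_singleton _)]

end FiniteValued

theorem expectedService_mem_ratePolytope {N K M : ℕ} [Nonempty (Fin K → Fin N)]
    {π : ChanState N K M → ℝ} (hπ : ∀ s, 0 ≤ π s)
    {Ω : Type*} [MeasurableSpace Ω] {μ : Measure Ω} [IsFiniteMeasure μ]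
    {C : Ω → ChanState N K M} {I : Ω → Fin K → Fin N} (hC : Measurable C) (hI : Measurable I)
    (hCdist : ∀ s, μ {ω | C ω = s} = ENNReal.ofReal (π s)) :
    (fun n => ∫ ω, serviceVec (C ω) (I ω) n ∂μ) ∈ ratePolytope π := by
  have hCI : Measurable fun ω => (C ω, I ω) := hC.prodMk hI
  set w : ChanState N K M → (Fin K → Fin N) → ℝ :=
    fun s f => μ.real ((fun ω => (C ω, I ω)) ⁻¹' {(s, f)})
  have hwπ : ∀ s, ∑ f, w s f = π s := by
    intro s
    have hfiber : (fun ω => (C ω, I ω)) ⁻¹' ↑({s} ×ˢ (univ : Finset (Fin K → Fin N))) =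
        {ω | C ω = s} := by
      ext ω
      simp [eq_comm]
    have := sum_measureReal_preimage_singleton (μ := μ) ({s} ×ˢ univ)
      (fun p _ => hCI (measurableSet_singleton p))
    rw [sum_product, sum_singleton, hfiber, measureReal_def, hCdist s,
      ENNReal.toReal_ofReal (hπ s)] at this
    exact this
  convert mem_ratePolytope_of_sum_eq (fun s f => measureReal_nonneg) hwπ using 1
  ext n
  rw [integral_comp_eq_sum_measureReal hCI fun p => serviceVec p.1 p.2 n, Fintype.sum_prod_type]
  simp [Finset.sum_apply]

section Queue

variable {Ω ι : Type*} {X A S : ℕ → Ω → ι → ℝ}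

theorem queue_nonneg (hX0 : ∀ ω n, 0 ≤ X 0 ω n) (hA : ∀ t ω n, 0 ≤ A t ω n)
    (hX : ∀ t, 1 ≤ t → ∀ ω n, X t ω n = max (X (t - 1) ω n - S t ω n) 0 + A t ω n) :
    ∀ t ω n, 0 ≤ X t ω n
  | 0 => hX0
  | t + 1 => fun ω n => by
    rw [hX (t + 1) (by omega)]
    exact add_nonneg (le_max_right _ _) (hA _ _ _)

variable [MeasurableSpace Ω] {μ : Measure Ω}

theorem queue_integrable (hX0 : ∀ n, Integrable (fun ω => X 0 ω n) μ)
    (hA : ∀ t n, Integrable (fun ω => A t ω n) μ) (hS : ∀ t n, Integrable (fun ω => S t ω n) μ)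
    (hX : ∀ t, 1 ≤ t → ∀ ω n, X t ω n = max (X (t - 1) ω n - S t ω n) 0 + A t ω n) :
    ∀ t n, Integrable (fun ω => X t ω n) μ
  | 0 => hX0
  | t + 1 => fun n => by
    simp_rw [hX (t + 1) (by omega), Nat.add_sub_cancel]
    exact ((queue_integrable hX0 hA hS hX t n).sub (hS _ n)).pos_part.add (hA _ n)

theorem sum_integral_arrival_le (hX0 : ∀ ω n, 0 ≤ X 0 ω n)
    (hX0i : ∀ n, Integrable (fun ω => X 0 ω n) μ)
    (hA : ∀ t n, Integrable (fun ω => A t ω n) μ) (hS : ∀ t n, Integrable (fun ω => S t ω n) μ)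
    (hX : ∀ t, 1 ≤ t → ∀ ω n, X t ω n = max (X (t - 1) ω n - S t ω n) 0 + A t ω n)
    (t : ℕ) (n : ι) :
    ∑ τ ∈ Icc 1 t, ∫ ω, A τ ω n ∂μ ≤
      ∑ τ ∈ Icc 1 t, ∫ ω, S τ ω n ∂μ + ∫ ω, X t ω n ∂μ := by
  have hXi := queue_integrable hX0i hA hS hX
  induction t with
  | zero => simpa using integral_nonneg (hX0 · n)
  | succ t ih =>
    have hstep : ∫ ω, X t ω n ∂μ + ∫ ω, A (t + 1) ω n ∂μ ≤
        ∫ ω, X (t + 1) ω n ∂μ + ∫ ω, S (t + 1) ω n ∂μ := by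
      rw [← integral_add (hXi t n) (hA _ n), ← integral_add (hXi _ n) (hS _ n)]
      refine integral_mono ((hXi t n).add (hA _ n)) ((hXi _ n).add (hS _ n)) fun ω => ?_
      simp only [hX (t + 1) (by omega) ω n, Nat.add_sub_cancel]
      linarith [le_max_left (X t ω n - S (t + 1) ω n) 0]
    rw [sum_Icc_succ_top (by omega), sum_Icc_succ_top (by omega)]
    linarith

end Queue

theorem frequently_le_two_mul_of_sum_range_le {F : ℕ → ℝ} {B : ℝ} (hF : ∀ t, 0 ≤ F t)
    (hB : ∀ t, 1 ≤ t → ∑ τ ∈ range t, F τ ≤ B * t) : ∃ᶠ t in atTop, F t ≤ 2 * B := by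
  refine frequently_atTop.2 fun T => ?_
  by_contra! hbig
  -- if `F > 2 B` from `T + 1` on, the window `[T + 1, 2 (T + 1))` alone outweighs `B · 2 (T + 1)`
  have hwindow : ∑ _τ ∈ Ico (T + 1) (2 * (T + 1)), 2 * B < ∑ τ ∈ Ico (T + 1) (2 * (T + 1)), F τ :=
    sum_lt_sum_of_nonempty (nonempty_Ico.2 (by omega)) fun τ hτ => hbig τ (by simp at hτ; omega)
  have hsub : ∑ τ ∈ Ico (T + 1) (2 * (T + 1)), F τ ≤ ∑ τ ∈ range (2 * (T + 1)), F τ :=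
    sum_le_sum_of_subset_of_nonneg (fun τ hτ => by simp at hτ ⊢; omega) fun τ _ _ => hF τ
  have htotal := hB (2 * (T + 1)) (by omega)
  simp only [sum_const, Nat.card_Ico, nsmul_eq_mul] at hwindow
  push_cast [show 2 * (T + 1) - (T + 1) = T + 1 by omega] at hwindow htotal
  linarith

theorem exists_strictMono_tendsto_div_zero {F : ℕ → ℝ} {B : ℝ} (hF : ∀ t, 0 ≤ F t)
    (hB : ∀ t, 1 ≤ t → ∑ τ ∈ range t, F τ ≤ B * t) :
    ∃ φ : ℕ → ℕ, StrictMono φ ∧ (∀ T, 1 ≤ φ T) ∧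
      Tendsto (fun T => F (φ T) / φ T) atTop (𝓝 0) := by
  obtain ⟨φ, hφ, hgood⟩ := extraction_of_frequently_atTop
    ((frequently_le_two_mul_of_sum_range_le hF hB).and_eventually (eventually_ge_atTop 1))
  refine ⟨φ, hφ, fun T => (hgood T).2, ?_⟩
  exact squeeze_zero (fun T => div_nonneg (hF _) (Nat.cast_nonneg _))
    (fun T => div_le_div_of_nonneg_right (hgood T).1 (Nat.cast_nonneg _))
    ((tendsto_const_div_atTop_nhds_zero_nat (2 * B)).comp hφ.tendsto_atTop)

theorem Convex.inv_smul_sum_Icc_mem {E : Type*} [AddCommGroup E] [Module ℝ E] {K : Set E}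
    (hK : Convex ℝ K) {r : ℕ → E} (hr : ∀ t, 1 ≤ t → r t ∈ K) {t : ℕ} (ht : 1 ≤ t) :
    (t : ℝ)⁻¹ • ∑ τ ∈ Icc 1 t, r τ ∈ K := by
  rw [smul_sum]
  refine hK.sum_mem (fun _ _ => by positivity) ?_ fun τ hτ => hr τ (Finset.mem_Icc.1 hτ).1
  rw [sum_const, Nat.card_Icc, nsmul_eq_mul, add_tsub_cancel_right]
  exact mul_inv_cancel₀ (by positivity)

theorem exists_mem_ge_of_sum_le_sum_add {ι : Type*} [Fintype ι] {K : Set (ι → ℝ)}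
    (hK : IsCompact K) (hKconv : Convex ℝ K) {a r x : ℕ → ι → ℝ} {abar : ι → ℝ}
    (hr : ∀ t, 1 ≤ t → r t ∈ K) (hx : ∀ t n, 0 ≤ x t n)
    (hbal : ∀ t n, ∑ τ ∈ Icc 1 t, a τ n ≤ ∑ τ ∈ Icc 1 t, r τ n + x t n)
    (hxB : ∀ n, ∃ B : ℝ, ∀ t : ℕ, 1 ≤ t → (∑ τ ∈ range t, x τ n) / t ≤ B)
    (ha : ∀ n, Tendsto (fun t : ℕ => (∑ τ ∈ Icc 1 t, a τ n) / t) atTop (𝓝 (abar n))) :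
    ∃ y ∈ K, ∀ n, abar n ≤ y n := by
  choose B hB using hxB
  obtain ⟨φ, hφ, hφ1, hxφ⟩ := exists_strictMono_tendsto_div_zero (F := fun t => ∑ n, x t n)
    (B := ∑ n, B n) (fun t => sum_nonneg fun n _ => hx t n) fun t ht => by
      rw [sum_comm, sum_mul]
      exact sum_le_sum fun n _ => (div_le_iff₀ (by positivity)).1 (hB n t ht)
  obtain ⟨y, hyK, ψ, hψ, hy⟩ :=
    hK.tendsto_subseq fun T => hKconv.inv_smul_sum_Icc_mem hr (hφ1 T)
  refine ⟨y, hyK, fun n => ?_⟩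
  have hbacklog : Tendsto (fun T => x (φ (ψ T)) n / φ (ψ T)) atTop (𝓝 0) :=
    squeeze_zero (fun T => div_nonneg (hx _ n) (Nat.cast_nonneg _))
      (fun T => div_le_div_of_nonneg_right (single_le_sum (fun m _ => hx (φ (ψ T)) m)
        (mem_univ n)) (Nat.cast_nonneg _)) (hxφ.comp hψ.tendsto_atTop)
  have hservice := (tendsto_pi_nhds.1 hy n).add hbacklog
  rw [add_zero] at hservice
  refine le_of_tendsto_of_tendsto' ((ha n).comp (hφ.comp hψ).tendsto_atTop) hservice fun T => ?_
  simp only [Function.comp_apply, Pi.smul_apply, Finset.sum_apply, smul_eq_mul, ← div_eq_inv_mul,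
    ← add_div]
  exact div_le_div_of_nonneg_right (hbal _ n) (Nat.cast_nonneg _)

theorem stmt_1_general
    {N K M : ℕ}
    (π : ChanState N K M → ℝ) (hπ0 : ∀ s, 0 ≤ π s)
    {Ω : Type} [MeasurableSpace Ω] (μ : Measure Ω) [IsProbabilityMeasure μ]
    (X0 : Ω → Fin N → ℝ) (hX0nn : ∀ ω n, 0 ≤ X0 ω n)
    (hX0int : ∀ n, Integrable (fun ω => X0 ω n) μ)
    (A : ℕ → Ω → Fin N → ℝ) (hAm : ∀ t, Measurable (A t))
    (hAnn : ∀ t ω n, 0 ≤ A t ω n)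
    (hA2int : ∀ t n, Integrable (fun ω => (A t ω n) ^ 2) μ)
    (Cch : ℕ → Ω → ChanState N K M) (hCm : ∀ t, Measurable (Cch t))
    (hCdist : ∀ t, 1 ≤ t → ∀ s, μ {ω | Cch t ω = s} = ENNReal.ofReal (π s))
    (Ipol : ℕ → Ω → Fin K → Fin N) (hIm : ∀ t, Measurable (Ipol t))
    (X : ℕ → Ω → Fin N → ℝ) (hX0eq : X 0 = X0)
    (hXrec : ∀ t, 1 ≤ t → ∀ ω n,
      X t ω n = max (X (t - 1) ω n - ∑ k, Cmat (Cch t ω) n k * allocMat (Ipol t ω) n k) 0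
        + A t ω n)
    (hstable : ∀ n, ∃ B : ℝ, ∀ t : ℕ, 1 ≤ t →
      (∑ τ ∈ Finset.range t, ∫ ω, X τ ω n ∂μ) / t ≤ B)
    (Abar : Fin N → ℝ)
    (hAbar : ∀ n, Filter.Tendsto
      (fun t : ℕ => (∑ τ ∈ Finset.Icc 1 t, ∫ ω, A τ ω n ∂μ) / t)
      Filter.atTop (nhds (Abar n))) :
    ∃ y ∈ ratePolytope π, ∀ n, Abar n ≤ y n := by
  have : Nonempty (Fin K → Fin N) := ⟨Ipol 0 (nonempty_of_isProbabilityMeasure μ).some⟩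
  have hAint : ∀ t n, Integrable (fun ω => A t ω n) μ := fun t n =>
    ((memLp_two_iff_integrable_sq ((measurable_pi_apply n).comp (hAm t)).aestronglyMeasurable).2
      (hA2int t n)).integrable one_le_two
  have hSint : ∀ t n, Integrable (fun ω => serviceVec (Cch t ω) (Ipol t ω) n) μ := fun t n =>
    integrable_comp_of_fintype ((hCm t).prodMk (hIm t)) fun p => serviceVec p.1 p.2 n
  subst hX0eq
  have hXnn := queue_nonneg hX0nn hAnn hXrec
  exact exists_mem_ge_of_sum_le_sum_add (isCompact_ratePolytope π) (convex_convexHull ℝ _)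
    (fun t ht => expectedService_mem_ratePolytope hπ0 (hCm t) (hIm t) (hCdist t ht))
    (fun t n => integral_nonneg (hXnn t · n))
    (sum_integral_arrival_le hX0nn hX0int hAint hSint hXrec) hstable hAbar

/-- if the MQMS system is strongly stable under some policy and the
time-average mean arrival rate vector exists, it lies in the downward closure of the
achievable-rate polytope. -/
theorem stmt_1
    {N K M : ℕ} [NeZero N] [NeZero K] [NeZero M]
    (π : ChanState N K M → ℝ) (hπ0 : ∀ s, 0 ≤ π s) (hπ1 : ∑ s : ChanState N K M, π s = 1)
    {Ω : Type} [MeasurableSpace Ω] (μ : Measure Ω) [IsProbabilityMeasure μ]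
    (X0 : Ω → Fin N → ℝ) (hX0m : Measurable X0) (hX0nn : ∀ ω n, 0 ≤ X0 ω n)
    (hX0int : ∀ n, Integrable (fun ω => X0 ω n) μ)
    (A : ℕ → Ω → Fin N → ℝ) (hAm : ∀ t, Measurable (A t))
    (hAnn : ∀ t ω n, 0 ≤ A t ω n)
    (Amax : ℝ)
    (hA2int : ∀ t n, Integrable (fun ω => (A t ω n) ^ 2) μ)
    (hA2 : ∀ t n, ∫ ω, (A t ω n) ^ 2 ∂μ ≤ Amax ^ 2)
    (Cch : ℕ → Ω → ChanState N K M) (hCm : ∀ t, Measurable (Cch t))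
    (hCdist : ∀ t, 1 ≤ t → ∀ s, μ {ω | Cch t ω = s} = ENNReal.ofReal (π s))
    (Ipol : ℕ → Ω → Fin K → Fin N) (hIm : ∀ t, Measurable (Ipol t))
    (X : ℕ → Ω → Fin N → ℝ) (hX0eq : X 0 = X0)
    (hXrec : ∀ t, 1 ≤ t → ∀ ω n,
      X t ω n = max (X (t - 1) ω n - ∑ k, Cmat (Cch t ω) n k * allocMat (Ipol t ω) n k) 0
        + A t ω n)
    (hstable : ∀ n, ∃ B : ℝ, ∀ t : ℕ, 1 ≤ t →
      (∑ τ ∈ Finset.range t, ∫ ω, X τ ω n ∂μ) / t ≤ B)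
    (Abar : Fin N → ℝ)
    (hAbar : ∀ n, Filter.Tendsto
      (fun t : ℕ => (∑ τ ∈ Finset.Icc 1 t, ∫ ω, A τ ω n ∂μ) / t)
      Filter.atTop (nhds (Abar n))) :
    ∃ y ∈ ratePolytope π, ∀ n, Abar n ≤ y n :=
  stmt_1_general π hπ0 μ X0 hX0nn hX0int A hAm hAnn hA2int Cch hCm hCdist Ipol hIm X hX0eq hXrec
    hstable Abar hAbar
end

section
/- For every α ∈ ℝ^N with nonnegative entries: (i) the inequality Σ_{n=1}^N α_n x_n ≤ b(α) is valid for the achievable-rate polytope P, i.e., it holds for every x ∈ P; and (ii) it is tight on P: the point x₀ ∈ ℝ^N with components x₀_n = Σ_{s∈S} π_s Σ_{k=1}^K (C_s)_{n,k} (I_s^α)_{n,k}, where for each s ∈ S the matrix I_s^α ∈ 𝓘 is any maximizer of Σ_{n,k} α_n (C_s)_{n,k} I_{n,k} over I ∈ 𝓘, belongs to P and satisfies Σ_{n=1}^N α_n (x₀)_n = b(α). Consequently b(α) = max_{x∈P} Σ_{n=1}^N α_n x_n for every nonnegative α, and the hyperplane {x : Σ_n α_n x_n = b(α)} is a face-defining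 hyperplane of P. -/
open MeasureTheory ProbabilityTheory Finset Filter

lemma rateVec_pair {N K M : ℕ} (π : ChanState N K M → ℝ)
    (α : Fin N → ℝ) (g : ChanState N K M → Fin K → Fin N) :
    ∑ n, α n * rateVec π g n = ∑ s : ChanState N K M, π s * weight α (Cmat s) (g s) := by
  simp only [rateVec, weight, Finset.mul_sum]
  rw [Finset.sum_comm]
  exact Finset.sum_congr rfl fun s _ => Finset.sum_congr rfl fun n _ =>
    Finset.sum_congr rfl fun k _ => by ring

/-- for nonnegative α, the inequality Σ_n α_n x_n ≤ b(α) is valid for the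
achievable-rate polytope P and is tight on P (any pointwise maximizing family of
allocation matrices yields a point of P lying on the hyperplane); consequently
b(α) = max_{x ∈ P} Σ_n α_n x_n, so the hyperplane is face defining. -/
theorem stmt_3
    {N K M : ℕ} [NeZero N] [NeZero K] [NeZero M]
    (π : ChanState N K M → ℝ) (hπ0 : ∀ s, 0 ≤ π s) (hπ1 : ∑ s : ChanState N K M, π s = 1)
    (α : Fin N → ℝ) (hα : ∀ n, 0 ≤ α n) :
    (∀ x ∈ ratePolytope π, ∑ n, α n * x n ≤ bCoef π α) ∧
    (∀ Iα : ChanState N K M → Fin K → Fin N,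
      (∀ s, ∀ f : Fin K → Fin N, weight α (Cmat s) f ≤ weight α (Cmat s) (Iα s)) →
      rateVec π Iα ∈ ratePolytope π ∧ ∑ n, α n * rateVec π Iα n = bCoef π α) ∧
    IsGreatest {y : ℝ | ∃ x ∈ ratePolytope π, y = ∑ n, α n * x n} (bCoef π α) := by
  have hlin : IsLinearMap ℝ (fun x : Fin N → ℝ => ∑ n, α n * x n) := by
    constructor
    · intro x y; simp [mul_add, Finset.sum_add_distrib]
    · intro c x
      simp only [Pi.smul_apply, smul_eq_mul, Finset.mul_sum]
      exact Finset.sum_congr rfl fun n _ => by ring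
  have hvalid : ∀ x ∈ ratePolytope π, ∑ n, α n * x n ≤ bCoef π α := by
    intro x hx
    have hconv : Convex ℝ {x : Fin N → ℝ | ∑ n, α n * x n ≤ bCoef π α} :=
      convex_halfSpace_le hlin (bCoef π α)
    have hsub : {r | ∃ g : ChanState N K M → Fin K → Fin N, r = rateVec π g} ⊆
        {x : Fin N → ℝ | ∑ n, α n * x n ≤ bCoef π α} := by
      rintro r ⟨g, rfl⟩
      show ∑ n, α n * rateVec π g n ≤ bCoef π α
      rw [rateVec_pair]
      refine Finset.sum_le_sum fun s _ => mul_le_mul_of_nonneg_left ?_ (hπ0 s)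
      exact Finset.le_sup' (weight α (Cmat s)) (Finset.mem_univ (g s))
    exact convexHull_min hsub hconv hx
  have hopt : ∀ Iα : ChanState N K M → Fin K → Fin N,
      (∀ s, ∀ f : Fin K → Fin N, weight α (Cmat s) f ≤ weight α (Cmat s) (Iα s)) →
      rateVec π Iα ∈ ratePolytope π ∧ ∑ n, α n * rateVec π Iα n = bCoef π α := by
    intro Iα hIα
    constructor
    · exact subset_convexHull ℝ _ ⟨Iα, rfl⟩
    · rw [rateVec_pair]
      refine Finset.sum_congr rfl fun s _ => ?_
      congr 1
      refine le_antisymm (Finset.le_sup' (weight α (Cmat s)) (Finset.mem_univ (Iα s))) ?_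
      exact Finset.sup'_le _ _ fun f _ => hIα s f
  refine ⟨hvalid, hopt, ?_, ?_⟩
  · have : ∀ s : ChanState N K M, ∃ f : Fin K → Fin N,
        ∀ f' : Fin K → Fin N, weight α (Cmat s) f' ≤ weight α (Cmat s) f := by
      intro s
      obtain ⟨f, -, hf⟩ := Finset.exists_mem_eq_sup' (Finset.univ_nonempty)
        (weight α (Cmat s))
      exact ⟨f, fun f' => hf ▸ Finset.le_sup' _ (Finset.mem_univ f')⟩
    choose Iα hIα using this
    obtain ⟨hmem, heq⟩ := hopt Iα hIα
    exact ⟨rateVec π Iα, hmem, heq.symm⟩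
  · rintro y ⟨x, hx, rfl⟩
    exact hvalid x hx
end

section
/- Assume π_s > 0 for every s ∈ S. If α ∈ ℝ^N has nonnegative entries and α ∉ V, then the face F_α = {x ∈ P : Σ_{n=1}^N α_n x_n = b(α)} of the achievable-rate polytope P is not a facet of P: the dimension of F_α (the rank of the direction of the affine span of F_α) is strictly less than dim(P) − 1. -/
/-!
Since `α ∉ V`, the queues split into a set `U` and its complement, both carrying positive weight,
such that no weight `α i` with `i ∈ U` times a capacity in `{1, …, M}` equals a weight `α j` with
`j ∉ U` times such a capacity. Write `α = β + γ` with `β` supported on `U` and `γ` off `U`. In every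
column of every channel state, the best `α`-weighted server is then won outright by the
`β`-part or by the `γ`-part (or the column is worthless to `β`), independently of the policy; so
all policies attaining `b(α)` share the values of `β ⬝ᵥ R` and `γ ⬝ᵥ R`, and these values persist
on the convex hull. Hence `F_α` lies in two independent hyperplanes and has dimension at most
`N - 2`, while `P` is full-dimensional: changing the allocation in the single state where only
queue `n` can be served moves the rate vector along the `n`-th axis.
-/

open MeasureTheory ProbabilityTheory Finset Filter

section ConvexHull

variable {𝕜 E : Type*} [Field 𝕜] [LinearOrder 𝕜] [IsStrictOrderedRing 𝕜] [AddCommGroup E]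
  [Module 𝕜 E]

theorem eq_of_mem_convexHull_of_apply_eq_max (f g : E →ₗ[𝕜] 𝕜) {s : Set E} {b c : 𝕜}
    (hf : ∀ y ∈ s, f y ≤ b) (hg : ∀ y ∈ s, f y = b → g y = c) {x : E}
    (hx : x ∈ convexHull 𝕜 s) (hfx : f x = b) : g x = c := by
  refine (convexHull_min (t := {x | f x ≤ b ∧ (f x = b → g x = c)})
    (fun y hy => ⟨hf y hy, hg y hy⟩) ?_ hx).2 hfx
  -- the points below the bound whose `g`-value is `c` as soon as they reach it form a convex set
  rintro x ⟨hxb, hxc⟩ y ⟨hyb, hyc⟩ p q hp hq hpq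
  have hfpq : f (p • x + q • y) = p * f x + q * f y := by simp
  have hpx := mul_nonneg hp (sub_nonneg.2 hxb)
  have hqy := mul_nonneg hq (sub_nonneg.2 hyb)
  refine ⟨by linear_combination hfpq + b * hpq + hpx + hqy, fun hb => ?_⟩
  obtain ⟨hpx, hqy⟩ := (add_eq_zero_iff_of_nonneg hpx hqy).1
    (by linear_combination b * hpq - hfpq.symm.trans hb)
  have hgx : p * g x = p * c := by
    rcases mul_eq_zero.1 hpx with h | h
    · simp [h]
    · rw [hxc (by linarith)]
  have hgy : q * g y = q * c := by
    rcases mul_eq_zero.1 hqy with h | h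
    · simp [h]
    · rw [hyc (by linarith)]
  simp only [map_add, map_smul, smul_eq_mul, hgx, hgy]
  rw [← add_mul, hpq, one_mul]

end ConvexHull

theorem vectorSpan_le_ker_of_subset_preimage {k V W : Type*} [Ring k] [AddCommGroup V]
    [Module k V] [AddCommGroup W] [Module k W] {s : Set V} (L : V →ₗ[k] W) {w : W}
    (hs : s ⊆ L ⁻¹' {w}) : vectorSpan k s ≤ LinearMap.ker L := by
  rw [vectorSpan_def, Submodule.span_le]
  rintro _ ⟨x, hx, y, hy, rfl⟩
  have hx' : L x = w := hs hx
  have hy' : L y = w := hs hy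
  simp [hx', hy']

theorem finrank_ker_prod_add_two {K V : Type*} [Field K] [AddCommGroup V] [Module K V]
    [FiniteDimensional K V] (f g : V →ₗ[K] K) {x y : V} (hfx : f x ≠ 0) (hgx : g x = 0)
    (hfy : f y = 0) (hgy : g y ≠ 0) :
    Module.finrank K (LinearMap.ker (f.prod g)) + 2 = Module.finrank K V := by
  have hsurj : LinearMap.range (f.prod g) = ⊤ := by
    refine LinearMap.range_eq_top.2 fun ⟨a, b⟩ => ⟨(a / f x) • x + (b / g y) • y, ?_⟩
    simp [hgx, hfy, hfx, hgy]
  have := LinearMap.finrank_range_add_finrank_ker (f.prod g)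
  rw [hsurj, finrank_top, Module.finrank_prod, Module.finrank_self] at this
  omega

section DominantSup

variable {ι : Type*} [Fintype ι] [Nonempty ι]

/-- The contribution of the `u`-part to the best value of a column whose weights split as
`u + v`: all of `sup u` if `u` strictly dominates, nothing otherwise. -/
noncomputable def dominantSup (u v : ι → ℝ) : ℝ :=
  if univ.sup' univ_nonempty v < univ.sup' univ_nonempty u then univ.sup' univ_nonempty u else 0

theorem eq_dominantSup_of_isMax {u v : ι → ℝ} (hu : ∀ n, 0 ≤ u n) (hv : ∀ n, 0 ≤ v n)
    (hdisj : ∀ n, u n = 0 ∨ v n = 0)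
    (htie : univ.sup' univ_nonempty u = univ.sup' univ_nonempty v →
      univ.sup' univ_nonempty u = 0)
    {n₀ : ι} (hmax : ∀ n, u n + v n ≤ u n₀ + v n₀) : u n₀ = dominantSup u v := by
  obtain ⟨i, -, hi⟩ := exists_mem_eq_sup' univ_nonempty u
  obtain ⟨j, -, hj⟩ := exists_mem_eq_sup' univ_nonempty v
  have hA : univ.sup' univ_nonempty u ≤ u n₀ + v n₀ :=
    hi ▸ (le_add_of_nonneg_right (hv i)).trans (hmax i)
  have hB : univ.sup' univ_nonempty v ≤ u n₀ + v n₀ :=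
    hj ▸ (le_add_of_nonneg_left (hu j)).trans (hmax j)
  have hu₀ := le_sup' u (mem_univ n₀)
  have hv₀ := le_sup' v (mem_univ n₀)
  unfold dominantSup
  split_ifs with hlt <;> rcases hdisj n₀ with h₀ | h₀
  · linarith
  · linarith
  · exact h₀
  · linarith [htie (by linarith)]

end DominantSup

section Rates

variable {N K M : ℕ}

theorem weight_eq_sum (α : Fin N → ℝ) (c : Fin N → Fin K → ℝ) (f : Fin K → Fin N) :
    weight α c f = ∑ k, α (f k) * c (f k) k := by
  unfold weight allocMat
  rw [sum_comm]
  refine sum_congr rfl fun k _ => ?_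
  simp [mul_ite]

theorem maxWeight_eq_sum_sup' [NeZero N] (α : Fin N → ℝ) (c : Fin N → Fin K → ℝ) :
    maxWeight α c = ∑ k, univ.sup' univ_nonempty (fun n => α n * c n k) := by
  refine le_antisymm (sup'_le _ _ fun f _ => ?_) ?_
  · rw [weight_eq_sum]
    exact sum_le_sum fun k _ => le_sup' (fun n => α n * c n k) (mem_univ (f k))
  · choose F hF using fun k => exists_mem_eq_sup' univ_nonempty (fun n => α n * c n k)
    calc ∑ k, univ.sup' univ_nonempty (fun n => α n * c n k) = weight α c F := by
          rw [weight_eq_sum]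
          exact sum_congr rfl fun k _ => (hF k).2
      _ ≤ maxWeight α c := le_sup' _ (mem_univ F)

theorem le_of_weight_eq_maxWeight [NeZero N] {α : Fin N → ℝ} {c : Fin N → Fin K → ℝ}
    {f : Fin K → Fin N} (hf : weight α c f = maxWeight α c) (k : Fin K) (n : Fin N) :
    α n * c n k ≤ α (f k) * c (f k) k := by
  rw [weight_eq_sum, maxWeight_eq_sum_sup'] at hf
  have hcol := (sum_eq_sum_iff_of_le fun k _ =>
    le_sup' (fun n => α n * c n k) (mem_univ (f k))).1 hf k (mem_univ k)
  exact hcol ▸ le_sup' (fun n => α n * c n k) (mem_univ n)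

theorem dotProduct_rateVec (π : ChanState N K M → ℝ) (θ : Fin N → ℝ)
    (g : ChanState N K M → Fin K → Fin N) :
    θ ⬝ᵥ rateVec π g = ∑ s, π s * weight θ (Cmat s) (g s) := by
  simp only [dotProduct, rateVec, weight, mul_sum]
  rw [sum_comm]
  exact sum_congr rfl fun s _ => sum_congr rfl fun n _ => sum_congr rfl fun k _ => by ring

variable [NeZero N] {π : ChanState N K M → ℝ}

theorem dotProduct_rateVec_le_bCoef (hπ : ∀ s, 0 ≤ π s) (α : Fin N → ℝ)
    (g : ChanState N K M → Fin K → Fin N) : α ⬝ᵥ rateVec π g ≤ bCoef π α := by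
  rw [dotProduct_rateVec]
  exact sum_le_sum fun s _ =>
    mul_le_mul_of_nonneg_left (le_sup' (weight α (Cmat s)) (mem_univ (g s))) (hπ s)

theorem weight_eq_maxWeight_of_dotProduct_rateVec_eq (hπ : ∀ s, 0 < π s) {α : Fin N → ℝ}
    {g : ChanState N K M → Fin K → Fin N} (hg : α ⬝ᵥ rateVec π g = bCoef π α)
    (s : ChanState N K M) : weight α (Cmat s) (g s) = maxWeight α (Cmat s) := by
  rw [dotProduct_rateVec] at hg
  have hle : ∀ s ∈ univ, π s * weight α (Cmat s) (g s) ≤ π s * maxWeight α (Cmat s) :=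
    fun s _ => mul_le_mul_of_nonneg_left (le_sup' _ (mem_univ (g s))) (hπ s).le
  exact mul_left_cancel₀ (hπ s).ne' ((sum_eq_sum_iff_of_le hle).1 hg s (mem_univ s))

end Rates

section Split

def NoTieAcross {ι : Type*} (M : ℕ) (α : ι → ℝ) (U : Set ι) : Prop :=
  ∀ i ∈ U, ∀ j ∉ U, ∀ m ∈ Icc 1 M, ∀ n ∈ Icc 1 M, 0 < α i → 0 < α j →
    α i * (m : ℝ) ≠ α j * (n : ℝ)

theorem NoTieAcross.compl {ι : Type*} {M : ℕ} {α : ι → ℝ} {U : Set ι} (h : NoTieAcross M α U) :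
    NoTieAcross M α Uᶜ :=
  fun i hi j hj m hm n hn hαi hαj heq => h j (not_not.1 hj) i hi n hn m hm hαj hαi heq.symm

theorem exists_noTieAcross_of_notMem_Vset {N M : ℕ} {α : Fin N → ℝ} (hα : ∀ n, 0 ≤ α n)
    (hαV : α ∉ Vset N M) :
    ∃ U : Set (Fin N), (∃ i ∈ U, 0 < α i) ∧ (∃ j ∉ U, 0 < α j) ∧ NoTieAcross M α U := by
  simp only [Vset, Set.mem_ofPred_eq, not_and, not_forall] at hαV
  obtain ⟨U, -, -, ⟨i, hiU, hi⟩, ⟨j, hjU, hj⟩, htie⟩ := hαV hα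
  refine ⟨U, ⟨i, hiU, (hα i).lt_of_ne' hi⟩, ⟨j, mem_compl.1 hjU, (hα j).lt_of_ne' hj⟩,
    fun i hi j hj m hm n hn hαi hαj heq =>
      htie ⟨i, hi, j, mem_compl.2 hj, m, hm, n, hn, hαi, hαj, heq⟩⟩

variable {ι : Type*} [Fintype ι] [Nonempty ι] {M : ℕ} {α : ι → ℝ} {U : Set ι}

theorem sup'_indicator_mul_eq_zero_of_eq (hα : ∀ n, 0 ≤ α n) (hU : NoTieAcross M α U)
    {d : ι → ℕ} (hd : ∀ n, d n ≤ M)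
    (h : univ.sup' univ_nonempty (fun n => U.indicator α n * d n)
      = univ.sup' univ_nonempty (fun n => Uᶜ.indicator α n * d n)) :
    univ.sup' univ_nonempty (fun n => U.indicator α n * d n) = 0 := by
  have hsupport : ∀ (V : Set ι) (n : ι), V.indicator α n * d n ≠ 0 →
      n ∈ V ∧ 0 < α n ∧ d n ∈ Icc 1 M ∧ V.indicator α n * d n = α n * d n := by
    intro V n hn
    by_cases hnV : n ∈ V
    · rw [Set.indicator_of_mem hnV] at hn ⊢
      obtain ⟨hαn, hdn⟩ := mul_ne_zero_iff.1 hn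
      exact ⟨hnV, (hα n).lt_of_ne' hαn,
        mem_Icc.2 ⟨Nat.one_le_iff_ne_zero.2 (by exact_mod_cast hdn), hd n⟩, rfl⟩
    · simp [Set.indicator_of_notMem hnV] at hn
  by_contra hne
  obtain ⟨i, -, hi⟩ := exists_mem_eq_sup' univ_nonempty (fun n => U.indicator α n * d n)
  obtain ⟨j, -, hj⟩ := exists_mem_eq_sup' univ_nonempty (fun n => Uᶜ.indicator α n * d n)
  obtain ⟨hiU, hαi, hdi, hi'⟩ := hsupport U i (hi ▸ hne)
  obtain ⟨hjU, hαj, hdj, hj'⟩ := hsupport Uᶜ j (hj ▸ h ▸ hne)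
  exact hU i hiU j hjU (d i) hdi (d j) hdj hαi hαj (by rw [← hi', ← hj', ← hi, ← hj, h])

end Split

section Face

variable {N K M : ℕ} [NeZero N] {π : ChanState N K M → ℝ} {α : Fin N → ℝ} {U : Set (Fin N)}

noncomputable def splitCoef (π : ChanState N K M → ℝ) (α : Fin N → ℝ) (U : Set (Fin N)) : ℝ :=
  ∑ s, π s * ∑ k,
    dominantSup (fun n => U.indicator α n * Cmat s n k) (fun n => Uᶜ.indicator α n * Cmat s n k)

theorem indicator_dotProduct_rateVec_eq_splitCoef (hπ : ∀ s, 0 < π s) (hα : ∀ n, 0 ≤ α n)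
    (hU : NoTieAcross M α U) {g : ChanState N K M → Fin K → Fin N}
    (hg : α ⬝ᵥ rateVec π g = bCoef π α) : U.indicator α ⬝ᵥ rateVec π g = splitCoef π α U := by
  rw [dotProduct_rateVec, splitCoef]
  refine sum_congr rfl fun s _ => congrArg (π s * ·) ?_
  rw [weight_eq_sum]
  have hCmat : ∀ n k, 0 ≤ Cmat s n k := fun n k => Nat.cast_nonneg _
  refine sum_congr rfl fun k _ => eq_dominantSup_of_isMax
    (fun n => mul_nonneg (Set.indicator_nonneg (fun n _ => hα n) n) (hCmat n k))
    (fun n => mul_nonneg (Set.indicator_nonneg (fun n _ => hα n) n) (hCmat n k))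
    (fun n => ?_)
    (sup'_indicator_mul_eq_zero_of_eq hα hU (d := fun n => s n k)
      fun n => Nat.lt_succ_iff.1 (s n k).isLt)
    (fun n => ?_)
  · by_cases hn : n ∈ U <;> simp [hn]
  · have := le_of_weight_eq_maxWeight (weight_eq_maxWeight_of_dotProduct_rateVec_eq hπ hg s) k n
    rwa [← U.indicator_self_add_compl α, Pi.add_apply, Pi.add_apply, add_mul, add_mul] at this

theorem indicator_dotProduct_eq_splitCoef_of_mem_face (hπ : ∀ s, 0 < π s) (hα : ∀ n, 0 ≤ α n)
    (hU : NoTieAcross M α U) {x : Fin N → ℝ} (hx : x ∈ ratePolytope π)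
    (hxα : α ⬝ᵥ x = bCoef π α) : U.indicator α ⬝ᵥ x = splitCoef π α U :=
  eq_of_mem_convexHull_of_apply_eq_max
    (dotProductBilin ℝ ℝ α) (dotProductBilin ℝ ℝ (U.indicator α))
    (by rintro _ ⟨g, rfl⟩; exact dotProduct_rateVec_le_bCoef (fun s => (hπ s).le) α g)
    (by rintro _ ⟨g, rfl⟩ hg; exact indicator_dotProduct_rateVec_eq_splitCoef hπ hα hU hg) hx hxα

end Face

section FullDimensional

variable {N K M : ℕ} {π : ChanState N K M → ℝ}

theorem rateVec_mem_ratePolytope (π : ChanState N K M → ℝ) (g : ChanState N K M → Fin K → Fin N) :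
    rateVec π g ∈ ratePolytope π :=
  subset_convexHull ℝ _ ⟨g, rfl⟩

/-- Serving `m` everywhere versus switching to `n` in the one state where only queue `n` has
capacity changes the rate vector in coordinate `n` alone. -/
theorem single_mem_vectorSpan_ratePolytope [NeZero K] [NeZero M] (hπ : ∀ s, 0 < π s)
    {n m : Fin N} (hmn : m ≠ n) : Pi.single n 1 ∈ vectorSpan ℝ (ratePolytope π) := by
  set t : ChanState N K M := fun i _ => if i = n then Fin.last M else 0
  set g : ChanState N K M → Fin K → Fin N := fun _ _ => m
  have hdiff : rateVec π (Function.update g t fun _ => n) - rateVec π g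
      = (π t * (K * M)) • Pi.single n 1 := by
    funext j
    simp only [rateVec, Pi.sub_apply, ← sum_sub_distrib, ← mul_sub]
    rw [sum_eq_single t (fun s _ hs => by simp [Function.update_of_ne hs]) (by simp)]
    by_cases hj : j = n
    · subst hj
      simp [t, g, Cmat, allocMat, hmn]
    · simp [t, Cmat, allocMat, hj]
  have hc : π t * (K * M) ≠ 0 :=
    (mul_pos (hπ t) (mul_pos (Nat.cast_pos.2 (NeZero.pos K)) (Nat.cast_pos.2 (NeZero.pos M)))).ne'
  have hmem := vsub_mem_vectorSpan ℝ (rateVec_mem_ratePolytope π (Function.update g t fun _ => n))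
    (rateVec_mem_ratePolytope π g)
  rw [vsub_eq_sub, hdiff] at hmem
  exact (Submodule.smul_mem_iff _ hc).1 hmem

theorem vectorSpan_ratePolytope_eq_top [NeZero K] [NeZero M] [Nontrivial (Fin N)]
    (hπ : ∀ s, 0 < π s) : vectorSpan ℝ (ratePolytope π) = ⊤ := by
  refine eq_top_iff.2 ((Pi.basisFun ℝ (Fin N)).span_eq.ge.trans (Submodule.span_le.2 ?_))
  rintro _ ⟨n, rfl⟩
  obtain ⟨m, hm⟩ := exists_ne n
  simpa using single_mem_vectorSpan_ratePolytope hπ hm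

end FullDimensional

theorem stmt_4_general
    {N K M : ℕ} [NeZero N] [NeZero K] [NeZero M]
    (π : ChanState N K M → ℝ) (hπpos : ∀ s, 0 < π s)
    (α : Fin N → ℝ) (hα : ∀ n, 0 ≤ α n) (hαV : α ∉ Vset N M) :
    Module.finrank ℝ
        (affineSpan ℝ {x ∈ ratePolytope π | ∑ n, α n * x n = bCoef π α}).direction
      < Module.finrank ℝ (affineSpan ℝ (ratePolytope π)).direction - 1 := by
  obtain ⟨U, ⟨i, hiU, hi⟩, ⟨j, hjU, hj⟩, hU⟩ := exists_noTieAcross_of_notMem_Vset hα hαV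
  have : Nontrivial (Fin N) := ⟨i, j, ne_of_mem_of_not_mem hiU hjU⟩
  set L := (dotProductBilin ℝ ℝ (U.indicator α)).prod (dotProductBilin ℝ ℝ (Uᶜ.indicator α))
  have hface : {x ∈ ratePolytope π | ∑ n, α n * x n = bCoef π α}
      ⊆ L ⁻¹' {(splitCoef π α U, splitCoef π α Uᶜ)} := fun x ⟨hx, hxα⟩ =>
    Prod.ext (indicator_dotProduct_eq_splitCoef_of_mem_face hπpos hα hU hx hxα)
      (indicator_dotProduct_eq_splitCoef_of_mem_face hπpos hα hU.compl hx hxα)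
  have hker : Module.finrank ℝ (LinearMap.ker L) + 2 = N :=
    (finrank_ker_prod_add_two _ _ (x := Pi.single i 1) (y := Pi.single j 1)
      (by simp [hiU, hi.ne']) (by simp [hiU]) (by simp [hjU]) (by simp [hjU, hj.ne'])).trans
      (Module.finrank_fin_fun ℝ)
  have hF := Submodule.finrank_mono (vectorSpan_le_ker_of_subset_preimage L hface)
  rw [direction_affineSpan, direction_affineSpan, vectorSpan_ratePolytope_eq_top hπpos,
    finrank_top, Module.finrank_fin_fun]
  omega

/-- if all channel states have positive probability and α is a nonnegative
weight vector not in V, then the face of P cut out by the hyperplane Σ_n α_n x_n = b(α)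
has dimension strictly less than dim(P) − 1, i.e. it is not a facet of P. -/
theorem stmt_4
    {N K M : ℕ} [NeZero N] [NeZero K] [NeZero M]
    (π : ChanState N K M → ℝ) (hπpos : ∀ s, 0 < π s) (hπ1 : ∑ s : ChanState N K M, π s = 1)
    (α : Fin N → ℝ) (hα : ∀ n, 0 ≤ α n) (hαV : α ∉ Vset N M) :
    Module.finrank ℝ
        (affineSpan ℝ {x ∈ ratePolytope π | ∑ n, α n * x n = bCoef π α}).direction
      < Module.finrank ℝ (affineSpan ℝ (ratePolytope π)).direction - 1 :=
  stmt_4_general π hπpos α hα hαV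
end

section
/- Every nonzero vector α ∈ V is a positive scalar multiple of an integer vector in W^N: for every α ∈ V with α ≠ 0 there exist q > 0 and β ∈ W^N such that α = q·β. Consequently there exists a finite set V̂ ⊆ W^N such that every nonzero α ∈ V can be written α = q·β with β ∈ V̂ and q > 0. -/
open MeasureTheory ProbabilityTheory Finset Filter

/-!
Let `S` be the support of `α`. Starting from one index of `S`, grow a set `T ⊆ S` on which `α`
is a positive multiple of a vector whose entries are products of `#T - 1` factors from
`{0,…,M}`. While `T ≠ S`, the defining property of `V` applied to the cut `(T, Tᶜ)` yields
`i ∈ T` and `j ∈ S \ T` with `α i * m = α j * n`; multiplying the old entries by `n`, taking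
`m * β i` as the entry at `j` and dividing the scale by `n` extends this to `insert j T`.
At `T = S`, pad the products with factors `1` and put `0` off the support. Since `W` is finite,
so is `W^N`, which serves as `V̂`.
-/

/-- `Wset N M` is definitionally `boundedFactorProducts M (N - 1)`. -/
def boundedFactorProducts (M k : ℕ) : Set ℝ :=
  {w | ∃ m : Fin k → ℕ, (∀ j, m j ≤ M) ∧ w = ∏ j, (m j : ℝ)}

namespace boundedFactorProducts

variable {M k : ℕ}

theorem one_mem_zero (M : ℕ) : (1 : ℝ) ∈ boundedFactorProducts M 0 :=
  ⟨Fin.elim0, fun j => j.elim0, by simp⟩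

theorem zero_mem (hk : k ≠ 0) : (0 : ℝ) ∈ boundedFactorProducts M k :=
  ⟨fun _ => 0, fun _ => Nat.zero_le M, by simp [hk]⟩

theorem natCast_mul_mem {w : ℝ} (hw : w ∈ boundedFactorProducts M k) {a : ℕ} (ha : a ≤ M) :
    (a : ℝ) * w ∈ boundedFactorProducts M (k + 1) := by
  obtain ⟨m, hmM, rfl⟩ := hw
  refine ⟨Fin.cons a m, Fin.cases ha hmM, ?_⟩
  rw [← Fin.prod_cons]
  exact Fintype.prod_congr _ _ (Fin.cases (by simp) (by simp))

theorem mono (hM : 1 ≤ M) {l : ℕ} (hkl : k ≤ l) :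
    boundedFactorProducts M k ⊆ boundedFactorProducts M l := by
  induction l, hkl using Nat.le_induction with
  | base => exact subset_rfl
  | succ l _ ih => exact fun w hw => by simpa using natCast_mul_mem (ih hw) hM

theorem finite (M k : ℕ) : (boundedFactorProducts M k).Finite := by
  refine (Set.finite_range fun m : Fin k → Fin (M + 1) => ∏ j, ((m j : ℕ) : ℝ)).subset ?_
  rintro _ ⟨m, hmM, rfl⟩
  exact ⟨fun j => ⟨m j, Nat.lt_succ_of_le (hmM j)⟩, rfl⟩

end boundedFactorProducts

theorem Finset.induction_on_exists_insert {ι : Type*} [DecidableEq ι] {P : Finset ι → Prop}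
    {S T₀ : Finset ι} (hT₀ : T₀ ⊆ S) (h₀ : P T₀)
    (step : ∀ T ⊆ S, T ≠ S → P T → ∃ j ∈ S, j ∉ T ∧ P (insert j T)) : P S := by
  classical
  obtain ⟨T, hT, hmax⟩ :=
    (S.powerset.filter P).exists_max_image card ⟨T₀, mem_filter.2 ⟨mem_powerset.2 hT₀, h₀⟩⟩
  rw [mem_filter, mem_powerset] at hT
  by_contra hS
  obtain ⟨j, hjS, hjT, hPj⟩ := step T hT.1 (fun h => hS (h ▸ hT.2)) hT.2
  have := hmax (insert j T) (mem_filter.2 ⟨mem_powerset.2 (insert_subset hjS hT.1), hPj⟩)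
  rw [card_insert_of_notMem hjT] at this
  omega

def IsScaledProductOn {ι : Type*} (M : ℕ) (α : ι → ℝ) (T : Finset ι) : Prop :=
  ∃ q : ℝ, 0 < q ∧ ∃ β : ι → ℝ,
    ∀ k ∈ T, β k ∈ boundedFactorProducts M (#T - 1) ∧ α k = q * β k

namespace IsScaledProductOn

variable {ι : Type*} {M : ℕ} {α : ι → ℝ}

theorem singleton {i : ι} (hi : 0 < α i) : IsScaledProductOn M α {i} :=
  ⟨α i, hi, fun _ => 1, fun k hk => by
    rw [mem_singleton.1 hk]
    exact ⟨boundedFactorProducts.one_mem_zero M, (mul_one _).symm⟩⟩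

theorem insert_of_mul_eq [DecidableEq ι] {T : Finset ι} (h : IsScaledProductOn M α T) {i j : ι}
    (hi : i ∈ T) (hj : j ∉ T) {m n : ℕ} (hm : m ≤ M) (hn : 1 ≤ n) (hnM : n ≤ M)
    (hrel : α i * m = α j * n) : IsScaledProductOn M α (insert j T) := by
  obtain ⟨q, hq, β, hβ⟩ := h
  have hn₀ : (0 : ℝ) < n := by exact_mod_cast hn
  have hcard : #(insert j T) - 1 = #T - 1 + 1 := by
    rw [card_insert_of_notMem hj, Nat.sub_add_cancel (card_pos.2 ⟨i, hi⟩)]; rfl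
  refine ⟨q / n, div_pos hq hn₀, Function.update (fun k => n * β k) j (m * β i), ?_⟩
  intro k hk
  rw [hcard]
  rcases mem_insert.1 hk with rfl | hkT
  · refine ⟨by simpa using boundedFactorProducts.natCast_mul_mem (hβ i hi).1 hm, ?_⟩
    rw [Function.update_self]
    rw [(hβ i hi).2] at hrel
    field_simp
    linarith
  · have hkj : k ≠ j := fun h => hj (h ▸ hkT)
    refine ⟨by simpa [hkj] using boundedFactorProducts.natCast_mul_mem (hβ k hkT).1 hnM, ?_⟩
    rw [Function.update_of_ne hkj, (hβ k hkT).2]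
    field_simp

end IsScaledProductOn

variable {N M : ℕ} {α : Fin N → ℝ}

theorem exists_insert_isScaledProductOn_of_mem_Vset (hα : α ∈ Vset N M) {T : Finset (Fin N)}
    (hTα : ∀ i ∈ T, α i ≠ 0) (hT : T.Nonempty) {s : Fin N} (hsT : s ∉ T) (hs : α s ≠ 0)
    (h : IsScaledProductOn M α T) :
    ∃ j, α j ≠ 0 ∧ j ∉ T ∧ IsScaledProductOn M α (insert j T) := by
  obtain ⟨i₀, hi₀⟩ := hT
  obtain ⟨i, hi, j, hj, m, hm, n, hn, -, hαj, hrel⟩ :=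
    hα.2 T ⟨i₀, hi₀⟩ (ne_of_mem_of_not_mem' (mem_univ s) hsT).symm ⟨i₀, hi₀, hTα i₀ hi₀⟩
      ⟨s, mem_compl.2 hsT, hs⟩
  rw [mem_Icc] at hm hn
  exact ⟨j, hαj.ne', mem_compl.1 hj, h.insert_of_mul_eq hi (mem_compl.1 hj) hm.2 hn.1 hn.2 hrel⟩

theorem isScaledProductOn_support_of_mem_Vset (hα : α ∈ Vset N M) (hα₀ : α ≠ 0) :
    IsScaledProductOn M α (univ.filter (α · ≠ 0)) := by
  obtain ⟨i₀, hi₀⟩ := Function.ne_iff.1 hα₀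
  -- `IsScaledProductOn M α ∅` holds trivially, so nonemptiness has to be carried along.
  refine And.right <| induction_on_exists_insert (S := univ.filter (α · ≠ 0))
    (P := fun T => T.Nonempty ∧ IsScaledProductOn M α T) (T₀ := {i₀}) (by simpa using hi₀)
    ⟨singleton_nonempty i₀, .singleton ((hα.1 i₀).lt_of_ne' hi₀)⟩ fun T hTS hTne hT => ?_
  obtain ⟨s, hsS, hsT⟩ := exists_of_ssubset (hTS.ssubset_of_ne hTne)
  obtain ⟨j, hj, hjT, hins⟩ := exists_insert_isScaledProductOn_of_mem_Vset hα
    (fun i hi => (mem_filter.1 (hTS hi)).2) hT.1 hsT (mem_filter.1 hsS).2 hT.2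
  exact ⟨j, mem_filter.2 ⟨mem_univ j, hj⟩, hjT, insert_nonempty j T, hins⟩

theorem exists_pos_smul_of_mem_Vset (hN : 2 ≤ N) (hM : 1 ≤ M) (hα : α ∈ Vset N M)
    (hα₀ : α ≠ 0) :
    ∃ q : ℝ, 0 < q ∧ ∃ β : Fin N → ℝ, (∀ n, β n ∈ Wset N M) ∧ α = q • β := by
  obtain ⟨q, hq, β, hβ⟩ := isScaledProductOn_support_of_mem_Vset hα hα₀
  refine ⟨q, hq, fun k => if α k = 0 then 0 else β k, fun k => ?_, funext fun k => ?_⟩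
  · dsimp only
    split_ifs with hk
    · exact boundedFactorProducts.zero_mem (by omega)
    · refine boundedFactorProducts.mono hM ?_ (hβ k (by simpa using hk)).1
      exact Nat.sub_le_sub_right ((card_le_univ _).trans (Fintype.card_fin N).le) 1
  · by_cases hk : α k = 0
    · simp [hk]
    · simpa [hk] using (hβ k (by simpa using hk)).2

/-- every nonzero α ∈ V is a positive scalar multiple of a vector of W^N;
consequently a finite subset V̂ ⊆ W^N suffices to represent all nonzero elements of V up
to positive scaling. -/
theorem stmt_5
    {N M : ℕ} (hN : 2 ≤ N) (hM : 1 ≤ M) :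
    (∀ α ∈ Vset N M, α ≠ 0 →
      ∃ q : ℝ, 0 < q ∧ ∃ β : Fin N → ℝ, (∀ n, β n ∈ Wset N M) ∧ α = q • β) ∧
    ∃ Vhat : Finset (Fin N → ℝ),
      (∀ β ∈ Vhat, ∀ n, β n ∈ Wset N M) ∧
      ∀ α ∈ Vset N M, α ≠ 0 → ∃ β ∈ Vhat, ∃ q : ℝ, 0 < q ∧ α = q • β := by
  have hW : {β : Fin N → ℝ | ∀ n, β n ∈ Wset N M}.Finite :=
    Set.Finite.pi' fun _ => boundedFactorProducts.finite M (N - 1)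
  refine ⟨fun α hα hα₀ => exists_pos_smul_of_mem_Vset hN hM hα hα₀, hW.toFinset,
    fun β hβ => hW.mem_toFinset.1 hβ, fun α hα hα₀ => ?_⟩
  obtain ⟨q, hq, β, hβ, rfl⟩ := exists_pos_smul_of_mem_Vset hN hM hα hα₀
  exact ⟨β, hW.mem_toFinset.2 hβ, q, hq, rfl⟩
end

section
/- Suppose the arrival process is stationary in mean, E[A(t)] = λ = (λ_1,…,λ_N) for all t. If there exists a server allocation policy under which the MQMS system is strongly stable, then Σ_{n=1}^N α_n λ_n ≤ b(α) for every α ∈ W^N; in particular the arrival rate vector λ satisfies this finite system of linear inequalities. -/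
/-!
Weight the queues by `α ≥ 0` and follow the expected weighted backlog
`V t = ∑ n, α n * E[X_n(t)]`. Dropping the `max` in the queue recursion shows that `V` increases
in one step by at least `∑ n, α n * λ n` minus the expected weighted service, and for every
channel state the weighted service of any allocation is at most the max-weight value, whose mean
under the channel law is `b(α)`. Hence `V` grows at least linearly with slope
`∑ n, α n * λ n - b(α)`; a positive slope would make the Cesàro means of `V` unbounded, against
strong stability.
-/

open MeasureTheory ProbabilityTheory Finset Filter

section FiniteLaw

variable {Ω S : Type*} [MeasurableSpace Ω] {μ : Measure Ω} [IsProbabilityMeasure μ]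
  [Fintype S] [MeasurableSpace S] [MeasurableSingletonClass S] {g : Ω → S}

lemma integrable_comp_of_finite (hg : Measurable g) (h : S → ℝ) :
    Integrable (fun ω => h (g ω)) μ :=
  Integrable.of_finite.comp_measurable hg

lemma integral_comp_of_finite_law (hg : Measurable g) {π : S → ℝ} (hπ : ∀ s, 0 ≤ π s)
    (hlaw : ∀ s, μ {ω | g ω = s} = ENNReal.ofReal (π s)) (h : S → ℝ) :
    ∫ ω, h (g ω) ∂μ = ∑ s, π s * h s := by
  rw [← integral_map hg.aemeasurable (Integrable.of_finite).aestronglyMeasurable,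
    integral_fintype Integrable.of_finite]
  refine Finset.sum_congr rfl fun s _ => ?_
  rw [measureReal_def, Measure.map_apply hg (measurableSet_singleton s)]
  simp [Set.preimage, hlaw, ENNReal.toReal_ofReal (hπ s)]

end FiniteLaw

lemma integrable_of_integrable_sq {Ω : Type*} [MeasurableSpace Ω] {μ : Measure Ω}
    [IsFiniteMeasure μ] {f : Ω → ℝ} (hf : Measurable f) (hf2 : Integrable (fun ω => f ω ^ 2) μ) :
    Integrable f μ :=
  ((memLp_two_iff_integrable_sq hf.aestronglyMeasurable).2 hf2).integrable one_le_two

section QueueStep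

variable {Ω : Type*} [MeasurableSpace Ω] {μ : Measure Ω}

lemma integrable_queue_update {x s a : Ω → ℝ} (hx : Integrable x μ) (hs : Integrable s μ)
    (ha : Integrable a μ) : Integrable (fun ω => max (x ω - s ω) 0 + a ω) μ :=
  ((hx.sub hs).pos_part).add ha

lemma integral_sub_add_le_integral_queue_update {x s a : Ω → ℝ} (hx : Integrable x μ)
    (hs : Integrable s μ) (ha : Integrable a μ) :
    ∫ ω, x ω ∂μ - ∫ ω, s ω ∂μ + ∫ ω, a ω ∂μ ≤ ∫ ω, max (x ω - s ω) 0 + a ω ∂μ :=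
  calc ∫ ω, x ω ∂μ - ∫ ω, s ω ∂μ + ∫ ω, a ω ∂μ = ∫ ω, x ω - s ω + a ω ∂μ := by
        have hxs : Integrable (fun ω => x ω - s ω) μ := hx.sub hs
        rw [integral_add hxs ha, integral_sub hx hs]
    _ ≤ _ := integral_mono ((hx.sub hs).add ha) (integrable_queue_update hx hs ha)
        fun ω => add_le_add_left (le_max_left _ _) _

lemma integrable_of_queue_recursion {x s a : ℕ → Ω → ℝ} (h0 : Integrable (x 0) μ)
    (hs : ∀ t, Integrable (s t) μ) (ha : ∀ t, Integrable (a t) μ)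
    (hrec : ∀ t, x (t + 1) = fun ω => max (x t ω - s (t + 1) ω) 0 + a (t + 1) ω) :
    ∀ t, Integrable (x t) μ
  | 0 => h0
  | t + 1 => hrec t ▸ integrable_queue_update (integrable_of_queue_recursion h0 hs ha hrec t)
      (hs _) (ha _)

end QueueStep

lemma nonpos_of_add_le_succ_of_cesaro_le {v : ℕ → ℝ} {δ B : ℝ} (hstep : ∀ t, v t + δ ≤ v (t + 1))
    (hB : ∀ t : ℕ, 1 ≤ t → (∑ τ ∈ range t, v τ) / t ≤ B) : δ ≤ 0 := by
  have hlin : ∀ t : ℕ, v 0 + t * δ ≤ v t := by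
    intro t
    induction t with
    | zero => simp
    | succ t ih => push_cast; linarith [hstep t]
  have hsum : ∀ t : ℕ, t * v 0 + δ * (t * (t - 1) / 2) ≤ ∑ τ ∈ range t, v τ := by
    intro t
    induction t with
    | zero => simp
    | succ t ih => rw [sum_range_succ]; push_cast; linarith [hlin t]
  have hslope : ∀ n : ℕ, δ * n ≤ 2 * (B - v 0) := by
    intro n
    have h := hB (n + 1) (by omega)
    rw [div_le_iff₀ (by positivity)] at h
    have := hsum (n + 1)
    push_cast at this h
    nlinarith
  by_contra! hδ
  obtain ⟨n, hn⟩ := exists_nat_gt (2 * (B - v 0) / δ)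
  rw [div_lt_iff₀ hδ] at hn
  linarith [hslope n]

lemma cesaro_sum_mul_le {ι : Type*} [Fintype ι] {α : ι → ℝ} (hα : ∀ i, 0 ≤ α i)
    {x : ℕ → ι → ℝ} {B : ι → ℝ} {t : ℕ} (hB : ∀ i, (∑ τ ∈ range t, x τ i) / t ≤ B i) :
    (∑ τ ∈ range t, ∑ i, α i * x τ i) / t ≤ ∑ i, α i * B i := by
  rw [sum_comm, sum_div]
  refine sum_le_sum fun i _ => ?_
  rw [← mul_sum, mul_div_assoc]
  exact mul_le_mul_of_nonneg_left (hB i) (hα i)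

lemma nonneg_of_mem_Wset {N M : ℕ} {w : ℝ} (hw : w ∈ Wset N M) : 0 ≤ w := by
  obtain ⟨m, -, rfl⟩ := hw
  positivity

def served {N K : ℕ} (c : Fin N → Fin K → ℝ) (f : Fin K → Fin N) (n : Fin N) : ℝ :=
  ∑ k, c n k * allocMat f n k

lemma sum_mul_served_le_maxWeight {N K : ℕ} [NeZero N] (α : Fin N → ℝ)
    (c : Fin N → Fin K → ℝ) (f : Fin K → Fin N) :
    ∑ n, α n * served c f n ≤ maxWeight α c := by
  have hweight : ∑ n, α n * served c f n = weight α c f := by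
    simp only [weight, served, mul_sum, mul_assoc]
  exact hweight ▸ le_sup' (weight α c) (mem_univ f)

section Service

variable {N K M : ℕ} {Ω : Type*} [MeasurableSpace Ω] {μ : Measure Ω} [IsProbabilityMeasure μ]
  {C : Ω → ChanState N K M} {I : Ω → Fin K → Fin N}

lemma integrable_served (hC : Measurable C) (hI : Measurable I) (n : Fin N) :
    Integrable (fun ω => served (Cmat (C ω)) (I ω) n) μ :=
  integrable_comp_of_finite (hC.prodMk hI) fun p => served (Cmat p.1) p.2 n

lemma sum_mul_integral_served_le_bCoef [NeZero N] (hC : Measurable C) (hI : Measurable I)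
    {π : ChanState N K M → ℝ} (hπ : ∀ s, 0 ≤ π s)
    (hlaw : ∀ s, μ {ω | C ω = s} = ENNReal.ofReal (π s)) (α : Fin N → ℝ) :
    ∑ n, α n * ∫ ω, served (Cmat (C ω)) (I ω) n ∂μ ≤ bCoef π α :=
  calc ∑ n, α n * ∫ ω, served (Cmat (C ω)) (I ω) n ∂μ
      = ∫ ω, ∑ n, α n * served (Cmat (C ω)) (I ω) n ∂μ := by
        rw [integral_finsetSum _ fun n _ => (integrable_served hC hI n).const_mul (α n)]
        simp only [integral_const_mul]
    _ ≤ ∫ ω, maxWeight α (Cmat (C ω)) ∂μ :=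
        integral_mono (integrable_finsetSum _ fun n _ =>
            (integrable_served hC hI n).const_mul (α n))
          (integrable_comp_of_finite hC fun s => maxWeight α (Cmat s))
          fun ω => sum_mul_served_le_maxWeight _ _ _
    _ = bCoef π α := integral_comp_of_finite_law hC hπ hlaw fun s => maxWeight α (Cmat s)

end Service

theorem stmt_6_general
    {N K M : ℕ} [NeZero N]
    (π : ChanState N K M → ℝ) (hπ0 : ∀ s, 0 ≤ π s)
    {Ω : Type} [MeasurableSpace Ω] (μ : Measure Ω) [IsProbabilityMeasure μ]
    (X0 : Ω → Fin N → ℝ)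
    (hX0int : ∀ n, Integrable (fun ω => X0 ω n) μ)
    (A : ℕ → Ω → Fin N → ℝ) (hAm : ∀ t, Measurable (A t))
    (hA2int : ∀ t n, Integrable (fun ω => (A t ω n) ^ 2) μ)
    (Cch : ℕ → Ω → ChanState N K M) (hCm : ∀ t, Measurable (Cch t))
    (hCdist : ∀ t, 1 ≤ t → ∀ s, μ {ω | Cch t ω = s} = ENNReal.ofReal (π s))
    (Ipol : ℕ → Ω → Fin K → Fin N) (hIm : ∀ t, Measurable (Ipol t))
    (X : ℕ → Ω → Fin N → ℝ) (hX0eq : X 0 = X0)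
    (hXrec : ∀ t, 1 ≤ t → ∀ ω n,
      X t ω n = max (X (t - 1) ω n - ∑ k, Cmat (Cch t ω) n k * allocMat (Ipol t ω) n k) 0
        + A t ω n)
    (hstable : ∀ n, ∃ B : ℝ, ∀ t : ℕ, 1 ≤ t →
      (∑ τ ∈ Finset.range t, ∫ ω, X τ ω n ∂μ) / t ≤ B)
    (lam : Fin N → ℝ)
    (hlam : ∀ t, 1 ≤ t → ∀ n, ∫ ω, A t ω n ∂μ = lam n) :
    ∀ α : Fin N → ℝ, (∀ n, α n ∈ Wset N M) → ∑ n, α n * lam n ≤ bCoef π α := by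
  intro α hα
  have hα0 : ∀ n, 0 ≤ α n := fun n => nonneg_of_mem_Wset (hα n)
  set S : ℕ → Ω → Fin N → ℝ := fun t ω => served (Cmat (Cch t ω)) (Ipol t ω)
  have hSint : ∀ n t, Integrable (fun ω => S t ω n) μ := fun n t =>
    integrable_served (hCm t) (hIm t) n
  have hAint : ∀ n t, Integrable (fun ω => A t ω n) μ := fun n t =>
    integrable_of_integrable_sq ((measurable_pi_apply n).comp (hAm t)) (hA2int t n)
  have hrec : ∀ n t, (fun ω => X (t + 1) ω n) =
      fun ω => max (X t ω n - S (t + 1) ω n) 0 + A (t + 1) ω n := fun n t =>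
    funext fun ω => hXrec (t + 1) t.succ_pos ω n
  have hXint : ∀ n t, Integrable (fun ω => X t ω n) μ := fun n =>
    integrable_of_queue_recursion (by simpa [hX0eq] using hX0int n) (hSint n) (hAint n) (hrec n)
  choose B hB using hstable
  refine sub_nonpos.1 (nonpos_of_add_le_succ_of_cesaro_le (B := ∑ n, α n * B n)
    (v := fun t => ∑ n, α n * ∫ ω, X t ω n ∂μ) (fun t => ?_)
    fun t ht => cesaro_sum_mul_le hα0 fun n => hB n t ht)
  have hstep : ∀ n,
      ∫ ω, X t ω n ∂μ - ∫ ω, S (t + 1) ω n ∂μ + lam n ≤ ∫ ω, X (t + 1) ω n ∂μ := by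
    intro n
    rw [hrec, ← hlam (t + 1) t.succ_pos n]
    exact integral_sub_add_le_integral_queue_update (hXint n t) (hSint n _) (hAint n _)
  have hserv : ∑ n, α n * ∫ ω, S (t + 1) ω n ∂μ ≤ bCoef π α :=
    sum_mul_integral_served_le_bCoef (hCm _) (hIm _) hπ0 (hCdist (t + 1) t.succ_pos) α
  calc ∑ n, α n * ∫ ω, X t ω n ∂μ + (∑ n, α n * lam n - bCoef π α)
      ≤ ∑ n, α n * (∫ ω, X t ω n ∂μ - ∫ ω, S (t + 1) ω n ∂μ + lam n) := by
        simp only [mul_add, mul_sub, sum_add_distrib, sum_sub_distrib]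
        linarith
    _ ≤ ∑ n, α n * ∫ ω, X (t + 1) ω n ∂μ :=
        sum_le_sum fun n _ => mul_le_mul_of_nonneg_left (hstep n) (hα0 n)

/-- with arrivals stationary in mean, strong stability under some policy
implies Σ_n α_n λ_n ≤ b(α) for every weight vector α ∈ W^N. -/
theorem stmt_6
    {N K M : ℕ} [NeZero N] [NeZero K] [NeZero M]
    (π : ChanState N K M → ℝ) (hπ0 : ∀ s, 0 ≤ π s) (hπ1 : ∑ s : ChanState N K M, π s = 1)
    {Ω : Type} [MeasurableSpace Ω] (μ : Measure Ω) [IsProbabilityMeasure μ]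
    (X0 : Ω → Fin N → ℝ) (hX0m : Measurable X0) (hX0nn : ∀ ω n, 0 ≤ X0 ω n)
    (hX0int : ∀ n, Integrable (fun ω => X0 ω n) μ)
    (A : ℕ → Ω → Fin N → ℝ) (hAm : ∀ t, Measurable (A t))
    (hAnn : ∀ t ω n, 0 ≤ A t ω n)
    (Amax : ℝ)
    (hA2int : ∀ t n, Integrable (fun ω => (A t ω n) ^ 2) μ)
    (hA2 : ∀ t n, ∫ ω, (A t ω n) ^ 2 ∂μ ≤ Amax ^ 2)
    (Cch : ℕ → Ω → ChanState N K M) (hCm : ∀ t, Measurable (Cch t))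
    (hCdist : ∀ t, 1 ≤ t → ∀ s, μ {ω | Cch t ω = s} = ENNReal.ofReal (π s))
    (Ipol : ℕ → Ω → Fin K → Fin N) (hIm : ∀ t, Measurable (Ipol t))
    (X : ℕ → Ω → Fin N → ℝ) (hX0eq : X 0 = X0)
    (hXrec : ∀ t, 1 ≤ t → ∀ ω n,
      X t ω n = max (X (t - 1) ω n - ∑ k, Cmat (Cch t ω) n k * allocMat (Ipol t ω) n k) 0
        + A t ω n)
    (hstable : ∀ n, ∃ B : ℝ, ∀ t : ℕ, 1 ≤ t →
      (∑ τ ∈ Finset.range t, ∫ ω, X τ ω n ∂μ) / t ≤ B)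
    (lam : Fin N → ℝ)
    (hlam : ∀ t, 1 ≤ t → ∀ n, ∫ ω, A t ω n ∂μ = lam n) :
    ∀ α : Fin N → ℝ, (∀ n, α n ∈ Wset N M) → ∑ n, α n * lam n ≤ bCoef π α :=
  stmt_6_general π hπ0 μ X0 hX0int A hAm hA2int Cch hCm hCdist Ipol hIm X hX0eq hXrec hstable lam
    hlam
end

section
/- (ON-OFF channels: binary weight vectors suffice.) Suppose M = 1. Then {x ∈ ℝ^N : x_n ≥ 0 for all n, and Σ_{n=1}^N α_n x_n ≤ b(α) for every α ∈ ℝ^N with nonnegative entries} = {x ∈ ℝ^N : x_n ≥ 0 for all n, and Σ_{n∈Q} x_n ≤ b(1_Q) for every nonempty subset Q ⊆ {1,…,N}}, where 1_Q denotes the 0/1 indicator vector of Q; i.e., for ON-OFF channels the 2^N − 1 inequalities indexed by nonempty subsets Q, together with nonnegativity, characterize the region. -/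
open MeasureTheory ProbabilityTheory Finset Filter

noncomputable section

lemma weight_eq {N K : ℕ} (α : Fin N → ℝ) (c : Fin N → Fin K → ℝ) (f : Fin K → Fin N) :
    weight α c f = ∑ k, α (f k) * c (f k) k := by
  unfold weight allocMat
  rw [Finset.sum_comm]
  refine Finset.sum_congr rfl fun k _ => ?_
  rw [Finset.sum_eq_single (f k)]
  · simp
  · intro n _ hn; simp [Ne.symm hn]
  · simp

lemma maxWeight_zero {N K : ℕ} [NeZero N] (c : Fin N → Fin K → ℝ) :
    maxWeight (fun _ => 0) c = 0 := by
  unfold maxWeight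
  have : (weight (fun _ => (0:ℝ)) c) = fun _ => (0:ℝ) := by
    funext f; rw [weight_eq]; simp
  rw [this, Finset.sup'_const]

lemma le_maxWeight {N K : ℕ} [NeZero N] (α : Fin N → ℝ) (c : Fin N → Fin K → ℝ)
    (f : Fin K → Fin N) : weight α c f ≤ maxWeight α c :=
  Finset.le_sup' (weight α c) (Finset.mem_univ f)

lemma mw_superadd {N K : ℕ} [NeZero N] (c : Fin N → Fin K → ℝ)
    (hc : ∀ n k, c n k = 0 ∨ c n k = 1) (Q : Finset (Fin N)) (m : ℝ) (hm : 0 ≤ m)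
    (α' : Fin N → ℝ) (hα' : ∀ n, 0 ≤ α' n) (hsupp : ∀ n, α' n ≠ 0 → n ∈ Q) :
    m * maxWeight (fun n => if n ∈ Q then 1 else 0) c + maxWeight α' c
      ≤ maxWeight (fun n => m * (if n ∈ Q then 1 else 0) + α' n) c := by
  classical
  obtain ⟨f1, -, hf1⟩ := Finset.exists_mem_eq_sup' (Finset.univ_nonempty)
    (weight (fun n => if n ∈ Q then (1:ℝ) else 0) c)
  obtain ⟨f2, -, hf2⟩ := Finset.exists_mem_eq_sup' (Finset.univ_nonempty) (weight α' c)
  set f : Fin K → Fin N := fun k => if 0 < α' (f2 k) * c (f2 k) k then f2 k else f1 k with hf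
  calc m * maxWeight (fun n => if n ∈ Q then 1 else 0) c + maxWeight α' c
      = ∑ k, (m * ((if f1 k ∈ Q then (1:ℝ) else 0) * c (f1 k) k)
          + α' (f2 k) * c (f2 k) k) := by
        unfold maxWeight; rw [hf1, hf2, weight_eq, weight_eq, Finset.mul_sum,
          ← Finset.sum_add_distrib]
    _ ≤ ∑ k, (m * (if f k ∈ Q then (1:ℝ) else 0) + α' (f k)) * c (f k) k := by
        refine Finset.sum_le_sum fun k _ => ?_
        by_cases hpos : 0 < α' (f2 k) * c (f2 k) k
        · have hfk : f k = f2 k := by rw [hf]; simp [hpos]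
          have hc2 : c (f2 k) k = 1 := by
            rcases hc (f2 k) k with h | h
            · rw [h] at hpos; simp at hpos
            · exact h
          have hne : α' (f2 k) ≠ 0 := by
            intro h; rw [h] at hpos; simp at hpos
          have hQ : f2 k ∈ Q := hsupp _ hne
          rw [hfk, hc2, if_pos hQ]
          have h1 : (if f1 k ∈ Q then (1:ℝ) else 0) * c (f1 k) k ≤ 1 := by
            rcases hc (f1 k) k with h | h <;> by_cases hq : f1 k ∈ Q <;>
              simp [h, hq]
          nlinarith
        · have hz : α' (f2 k) * c (f2 k) k = 0 := by
            have h0 : 0 ≤ α' (f2 k) * c (f2 k) k := by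
              rcases hc (f2 k) k with h | h <;> simp [h, hα' (f2 k)]
            linarith [not_lt.mp hpos]
          have hfk : f k = f1 k := by rw [hf]; simp [hpos]
          rw [hfk, hz]
          rcases hc (f1 k) k with h | h <;> by_cases hq : f1 k ∈ Q <;>
            simp [h, hq] <;> nlinarith [hα' (f1 k)]
    _ = weight (fun n => m * (if n ∈ Q then 1 else 0) + α' n) c f := by rw [weight_eq]
    _ ≤ _ := le_maxWeight _ _ _

end

noncomputable section

lemma cmat_onoff {N K : ℕ} (s : ChanState N K 1) (n : Fin N) (k : Fin K) :
    Cmat s n k = 0 ∨ Cmat s n k = 1 := by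
  unfold Cmat
  have := (s n k).is_lt
  interval_cases h : (s n k : ℕ) <;> simp

lemma bCoef_superadd {N K : ℕ} [NeZero N] (π : ChanState N K 1 → ℝ)
    (hπ0 : ∀ s, 0 ≤ π s) (Q : Finset (Fin N)) (m : ℝ) (hm : 0 ≤ m)
    (α' : Fin N → ℝ) (hα' : ∀ n, 0 ≤ α' n) (hsupp : ∀ n, α' n ≠ 0 → n ∈ Q) :
    m * bCoef π (fun n => if n ∈ Q then 1 else 0) + bCoef π α'
      ≤ bCoef π (fun n => m * (if n ∈ Q then 1 else 0) + α' n) := by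
  unfold bCoef
  rw [Finset.mul_sum, ← Finset.sum_add_distrib]
  refine Finset.sum_le_sum fun s _ => ?_
  have key := mw_superadd (Cmat s) (cmat_onoff s) Q m hm α' hα' hsupp
  have h := mul_le_mul_of_nonneg_left key (hπ0 s)
  nlinarith [h]

lemma main_ind {N K : ℕ} [NeZero N] (π : ChanState N K 1 → ℝ)
    (hπ0 : ∀ s, 0 ≤ π s) (x : Fin N → ℝ)
    (hx : ∀ Q : Finset (Fin N), Q.Nonempty →
      ∑ n ∈ Q, x n ≤ bCoef π (fun n => if n ∈ Q then 1 else 0)) :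
    ∀ d : ℕ, ∀ α : Fin N → ℝ,
      (Finset.univ.filter (fun n => α n ≠ 0)).card ≤ d → (∀ n, 0 ≤ α n) →
      ∑ n, α n * x n ≤ bCoef π α := by
  classical
  intro d
  induction d with
  | zero =>
    intro α hcard hα
    have hz : ∀ n, α n = 0 := by
      intro n
      by_contra h
      have : n ∈ Finset.univ.filter (fun n => α n ≠ 0) := by simp [h]
      have := Finset.card_pos.mpr ⟨n, this⟩
      omega
    have hα0 : α = fun _ => 0 := funext hz
    rw [hα0]
    unfold bCoef
    simp [maxWeight_zero]
  | succ d ih =>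
    intro α hcard hα
    set Q : Finset (Fin N) := Finset.univ.filter (fun n => α n ≠ 0) with hQdef
    rcases Q.eq_empty_or_nonempty with hQe | hQne
    · exact ih α (by rw [← hQdef, hQe]; simp) hα
    · obtain ⟨n₀, hn₀Q, hn₀min⟩ := Finset.exists_min_image Q α hQne
      set m := α n₀ with hmdef
      have hm0 : 0 < m := by
        have : α n₀ ≠ 0 := by simpa [hQdef] using hn₀Q
        exact lt_of_le_of_ne (hα n₀) (Ne.symm this)
      set α' : Fin N → ℝ := fun n => α n - m * (if n ∈ Q then 1 else 0) with hα'def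
      have hα'0 : ∀ n, 0 ≤ α' n := by
        intro n
        by_cases h : n ∈ Q
        · simp only [hα'def, h, if_pos, mul_one]
          linarith [hn₀min n h]
        · simp only [hα'def, h, if_neg, not_false_iff, mul_zero, sub_zero]
          exact hα n
      have hsupp : ∀ n, α' n ≠ 0 → n ∈ Q := by
        intro n h
        by_contra hn
        apply h
        have hzn : α n = 0 := by
          by_contra h'
          exact hn (by simp [hQdef, h'])
        simp [hα'def, hn, hzn]
      have hdecomp : α = fun n => m * (if n ∈ Q then 1 else 0) + α' n := by
        funext n; simp [hα'def]
      have hcard' : (Finset.univ.filter (fun n => α' n ≠ 0)).card ≤ d := by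
        have hsub : Finset.univ.filter (fun n => α' n ≠ 0) ⊆ Q.erase n₀ := by
          intro n hn
          simp only [Finset.mem_filter] at hn
          refine Finset.mem_erase.mpr ⟨?_, hsupp n hn.2⟩
          intro h
          apply hn.2
          simp [hα'def, h, hn₀Q, hmdef]
        have := Finset.card_le_card hsub
        have h2 := Finset.card_erase_of_mem hn₀Q
        have h3 : Q.card ≤ d + 1 := hcard
        have h4 : 0 < Q.card := Finset.card_pos.mpr hQne
        omega
      have hsum : ∑ n, α n * x n
          = m * ∑ n ∈ Q, x n + ∑ n, α' n * x n := by
        have hterm : ∀ n, α n * x n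
            = (if n ∈ Q then m * x n else 0) + α' n * x n := by
          intro n
          rw [hdecomp]
          by_cases h : n ∈ Q <;> simp [h] <;> ring
        rw [Finset.sum_congr rfl fun n _ => hterm n, Finset.sum_add_distrib]
        congr 1
        rw [Finset.sum_ite_mem, Finset.univ_inter, Finset.mul_sum]
      rw [hsum]
      have h1 : m * ∑ n ∈ Q, x n ≤ m * bCoef π (fun n => if n ∈ Q then 1 else 0) :=
        mul_le_mul_of_nonneg_left (hx Q hQne) hm0.le
      have h2 : ∑ n, α' n * x n ≤ bCoef π α' := ih α' hcard' hα'0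
      have h3 := bCoef_superadd π hπ0 Q m hm0.le α' hα'0 hsupp
      have h4 : bCoef π (fun n => m * (if n ∈ Q then 1 else 0) + α' n) = bCoef π α := by
        rw [hdecomp]
      linarith

end

/-- for ON-OFF channels (M = 1), the region cut out by all nonnegative
weight vectors coincides with the region cut out by the 2^N − 1 binary weight vectors
indexed by nonempty subsets Q ⊆ {1,…,N}, together with nonnegativity. -/
theorem stmt_14
    {N K : ℕ} [NeZero N] [NeZero K]
    (π : ChanState N K 1 → ℝ) (hπ0 : ∀ s, 0 ≤ π s) (hπ1 : ∑ s : ChanState N K 1, π s = 1) :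
    {x : Fin N → ℝ | (∀ n, 0 ≤ x n) ∧
        ∀ α : Fin N → ℝ, (∀ n, 0 ≤ α n) → ∑ n, α n * x n ≤ bCoef π α}
      = {x : Fin N → ℝ | (∀ n, 0 ≤ x n) ∧
          ∀ Q : Finset (Fin N), Q.Nonempty →
            ∑ n ∈ Q, x n ≤ bCoef π (fun n => if n ∈ Q then 1 else 0)} := by
  ext x
  simp only [Set.mem_setOf_eq]
  constructor
  · rintro ⟨hx0, hx⟩
    refine ⟨hx0, fun Q hQ => ?_⟩
    have h := hx (fun n => if n ∈ Q then 1 else 0) (fun n => by positivity)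
    calc ∑ n ∈ Q, x n = ∑ n, (if n ∈ Q then (1:ℝ) else 0) * x n := by
          have ht : ∀ n, (if n ∈ Q then (1:ℝ) else 0) * x n = if n ∈ Q then x n else 0 := by
            intro n; by_cases h : n ∈ Q <;> simp [h]
          rw [Finset.sum_congr rfl fun n _ => ht n, Finset.sum_ite_mem, Finset.univ_inter]
      _ ≤ _ := h
  · rintro ⟨hx0, hx⟩
    refine ⟨hx0, fun α hα => ?_⟩
    exact main_ind π hπ0 x hx (Finset.univ.filter (fun n => α n ≠ 0)).card α le_rfl hα
end

section
/- (Stability region of the two-queue one-server fluid MQMS system with exponential channels.) Let μ_1, μ_2 > 0 and let C_1, C_2 be independent exponential random variables with means μ_1 and μ_2 respectively. Then for all λ_1, λ_2 ≥ 0, the following are equivalent: (1) for every α_1, α_2 ≥ 0, α_1 λ_1 + α_2 λ_2 ≤ E[max(α_1 C_1, α_2 C_2)]; (2) λ_1 ≤ μ_1 and λ_2 ≤ μ_2 · √(1 − λ_1/μ_1) · (2 − √(1 − λ_1/μ_1)). -/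
open MeasureTheory ProbabilityTheory Finset Filter

/-!
Writing `max = aC₁ + bC₂ - min` and using that the minimum of independent exponential variables
is exponential with the sum of the rates gives `E[max(aC₁, bC₂)] = (A² + AB + B²)/(A + B)` with
`A = aμ₁`, `B = bμ₂`. The inequalities are homogeneous, so with `x = λ₁/μ₁`, `y = λ₂/μ₂` they say
`x ≤ 1` and `y ≤ t(1 - x) + 1/(1 + t)` for all `t = A/B ≥ 0`; for `c = √(1 - x) > 0` the right-hand
side is minimal at `t = (1 - c)/c`, with value `c(2 - c)`.
-/

open Set Real

namespace ProbabilityTheory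

lemma eq_of_measureReal_Ioi {ν ν' : Measure ℝ} [IsProbabilityMeasure ν] [IsProbabilityMeasure ν']
    (h : ∀ t, ν.real (Ioi t) = ν'.real (Ioi t)) : ν = ν' := by
  refine Measure.eq_of_cdf ν ν' ?_
  ext t
  rw [cdf_eq_real, cdf_eq_real, ← compl_Ioi, measureReal_compl measurableSet_Ioi,
    measureReal_compl measurableSet_Ioi, h, probReal_univ, probReal_univ]

variable {r s : ℝ}

lemma measureReal_expMeasure_Ioi (hr : 0 < r) (t : ℝ) :
    (expMeasure r).real (Ioi t) = exp (-(r * max t 0)) := by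
  have := isProbabilityMeasure_expMeasure hr
  rw [← compl_Iic, measureReal_compl measurableSet_Iic, ← cdf_eq_real, cdf_expMeasure_eq hr,
    probReal_univ]
  split_ifs with ht
  · rw [max_eq_left ht]; ring
  · rw [max_eq_right (not_le.1 ht).le]; simp

lemma expMeasure_map_const_mul (hr : 0 < r) {a : ℝ} (ha : 0 < a) :
    (expMeasure r).map (a * ·) = expMeasure (r / a) := by
  have := isProbabilityMeasure_expMeasure hr
  have := isProbabilityMeasure_expMeasure (div_pos hr ha)
  have := Measure.isProbabilityMeasure_map (μ := expMeasure r) (measurable_const_mul a).aemeasurable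
  refine eq_of_measureReal_Ioi fun t => ?_
  rw [map_measureReal_apply (measurable_const_mul a) measurableSet_Ioi,
    measureReal_expMeasure_Ioi (div_pos hr ha)]
  have hpre : (a * ·) ⁻¹' Ioi t = Ioi (t / a) := by
    ext x; simp [div_lt_iff₀' ha]
  rw [hpre, measureReal_expMeasure_Ioi hr, ← zero_div a, max_div_div_right ha.le, zero_div]
  ring_nf

lemma expMeasure_prod_map_min (hr : 0 < r) (hs : 0 < s) :
    ((expMeasure r).prod (expMeasure s)).map (fun p => min p.1 p.2) = expMeasure (r + s) := by
  have := isProbabilityMeasure_expMeasure hr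
  have := isProbabilityMeasure_expMeasure hs
  have := isProbabilityMeasure_expMeasure (add_pos hr hs)
  have := Measure.isProbabilityMeasure_map (μ := (expMeasure r).prod (expMeasure s))
    (f := fun p : ℝ × ℝ => min p.1 p.2) (by fun_prop)
  refine eq_of_measureReal_Ioi fun t => ?_
  have hpre : (fun p : ℝ × ℝ => min p.1 p.2) ⁻¹' Ioi t = Ioi t ×ˢ Ioi t := by
    ext p; simp
  rw [map_measureReal_apply (by fun_prop) measurableSet_Ioi, hpre, measureReal_prod_prod,
    measureReal_expMeasure_Ioi hr, measureReal_expMeasure_Ioi hs,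
    measureReal_expMeasure_Ioi (add_pos hr hs), ← exp_add]
  ring_nf

lemma expMeasure_Iic_zero (hr : 0 < r) : expMeasure r (Iic 0) = 0 := by
  have := isProbabilityMeasure_expMeasure hr
  rw [← ofReal_cdf, cdf_expMeasure_eq hr]
  simp

lemma ae_pos_expMeasure (hr : 0 < r) : ∀ᵐ x ∂expMeasure r, 0 < x := by
  rw [ae_iff]
  simp only [not_lt]
  exact expMeasure_Iic_zero hr

lemma lintegral_ofReal_expMeasure (hr : 0 < r) :
    ∫⁻ x, ENNReal.ofReal x ∂expMeasure r = ENNReal.ofReal r⁻¹ := by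
  have htail : ∀ t ∈ Ioi (0 : ℝ), expMeasure r {x | t < x} = ENNReal.ofReal (exp (-(r * t))) := by
    intro t ht
    have := isProbabilityMeasure_expMeasure hr
    rw [← ofReal_measureReal, Ioi_def, measureReal_expMeasure_Ioi hr, max_eq_left (le_of_lt ht)]
  have hint : IntegrableOn (fun t => exp (-(r * t))) (Ioi 0) := by
    simpa only [neg_mul] using integrableOn_exp_mul_Ioi (neg_lt_zero.2 hr) 0
  rw [lintegral_eq_lintegral_meas_lt _ ((ae_pos_expMeasure hr).mono fun _ => le_of_lt)
      aemeasurable_id, setLIntegral_congr_fun measurableSet_Ioi htail,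
    ← ofReal_integral_eq_lintegral_ofReal hint (.of_forall fun _ => (exp_pos _).le)]
  congr 1
  simpa only [neg_mul, mul_zero, exp_zero, neg_div_neg_eq, one_div] using
    integral_exp_mul_Ioi (neg_lt_zero.2 hr) 0

lemma integrable_id_expMeasure (hr : 0 < r) : Integrable id (expMeasure r) :=
  ⟨aestronglyMeasurable_id, (hasFiniteIntegral_iff_ofReal
    ((ae_pos_expMeasure hr).mono fun _ => le_of_lt)).2
    (by simp [lintegral_ofReal_expMeasure hr])⟩

lemma integral_id_expMeasure (hr : 0 < r) : ∫ x, x ∂expMeasure r = r⁻¹ := by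
  rw [integral_eq_lintegral_of_nonneg_ae ((ae_pos_expMeasure hr).mono fun _ => le_of_lt)
    aestronglyMeasurable_id, lintegral_ofReal_expMeasure hr, ENNReal.toReal_ofReal (by positivity)]

section RandomVariable

variable {Ω : Type*} {mΩ : MeasurableSpace Ω} {P : Measure Ω} {X Y : Ω → ℝ}

lemma HasLaw.ae_pos_of_expMeasure (hX : HasLaw X (expMeasure r) P) (hr : 0 < r) :
    ∀ᵐ ω ∂P, 0 < X ω :=
  ae_of_ae_map hX.aemeasurable (hX.map_eq ▸ ae_pos_expMeasure hr)

lemma HasLaw.integrable_of_expMeasure (hX : HasLaw X (expMeasure r) P) (hr : 0 < r) :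
    Integrable X P :=
  (integrable_map_measure aestronglyMeasurable_id hX.aemeasurable).1
    (hX.map_eq ▸ integrable_id_expMeasure hr)

lemma HasLaw.integral_of_expMeasure (hX : HasLaw X (expMeasure r) P) (hr : 0 < r) :
    ∫ ω, X ω ∂P = r⁻¹ :=
  hX.integral_eq.trans (integral_id_expMeasure hr)

lemma HasLaw.const_mul_of_expMeasure (hX : HasLaw X (expMeasure r) P) (hr : 0 < r) {a : ℝ}
    (ha : 0 < a) : HasLaw (fun ω => a * X ω) (expMeasure (r / a)) P :=
  HasLaw.fun_comp (Y := (a * ·))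
    ⟨(measurable_const_mul a).aemeasurable, expMeasure_map_const_mul hr ha⟩ hX

lemma IndepFun.hasLaw_min_of_expMeasure [IsProbabilityMeasure P]
    (hX : HasLaw X (expMeasure r) P) (hY : HasLaw Y (expMeasure s) P) (hXY : X ⟂ᵢ[P] Y)
    (hr : 0 < r) (hs : 0 < s) : HasLaw (fun ω => min (X ω) (Y ω)) (expMeasure (r + s)) P :=
  HasLaw.fun_comp (X := fun ω => (X ω, Y ω)) (Y := fun p : ℝ × ℝ => min p.1 p.2)
    ⟨by fun_prop, expMeasure_prod_map_min hr hs⟩ (hXY.hasLaw_prod hX hY)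

lemma IndepFun.integral_min_const_mul_of_expMeasure [IsProbabilityMeasure P]
    (hX : HasLaw X (expMeasure r) P) (hY : HasLaw Y (expMeasure s) P) (hXY : X ⟂ᵢ[P] Y)
    (hr : 0 < r) (hs : 0 < s) {a b : ℝ} (ha : 0 ≤ a) (hb : 0 ≤ b) :
    ∫ ω, min (a * X ω) (b * Y ω) ∂P = a / r * (b / s) / (a / r + b / s) := by
  rcases ha.eq_or_lt with rfl | ha
  · rw [zero_div, zero_mul, zero_div, integral_eq_zero_of_ae]
    filter_upwards [hY.ae_pos_of_expMeasure hs] with ω hω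
    simpa using mul_nonneg hb hω.le
  rcases hb.eq_or_lt with rfl | hb
  · rw [zero_div, mul_zero, zero_div, integral_eq_zero_of_ae]
    filter_upwards [hX.ae_pos_of_expMeasure hr] with ω hω
    simpa using mul_nonneg ha.le hω.le
  have hmin := (hXY.comp (measurable_const_mul a) (measurable_const_mul b)).hasLaw_min_of_expMeasure
    (hX.const_mul_of_expMeasure hr ha) (hY.const_mul_of_expMeasure hs hb)
    (div_pos hr ha) (div_pos hs hb)
  rw [hmin.integral_of_expMeasure (by positivity)]
  field_simp
  ring

lemma IndepFun.integral_max_const_mul_of_expMeasure [IsProbabilityMeasure P]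
    (hX : HasLaw X (expMeasure r) P) (hY : HasLaw Y (expMeasure s) P) (hXY : X ⟂ᵢ[P] Y)
    (hr : 0 < r) (hs : 0 < s) {a b : ℝ} (ha : 0 ≤ a) (hb : 0 ≤ b) :
    ∫ ω, max (a * X ω) (b * Y ω) ∂P
      = ((a / r) ^ 2 + a / r * (b / s) + (b / s) ^ 2) / (a / r + b / s) := by
  have haX := (hX.integrable_of_expMeasure hr).const_mul a
  have hbY := (hY.integrable_of_expMeasure hs).const_mul b
  have hmax : (fun ω => max (a * X ω) (b * Y ω))
      = fun ω => a * X ω + b * Y ω - min (a * X ω) (b * Y ω) := by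
    ext ω; linarith [min_add_max (a * X ω) (b * Y ω)]
  have hsum : Integrable (fun ω => a * X ω + b * Y ω) P := haX.add hbY
  have hmin : Integrable (fun ω => min (a * X ω) (b * Y ω)) P := haX.inf hbY
  rw [hmax, integral_sub hsum hmin, integral_add haX hbY, integral_const_mul, integral_const_mul,
    hX.integral_of_expMeasure hr, hY.integral_of_expMeasure hs,
    hXY.integral_min_const_mul_of_expMeasure hX hY hr hs ha hb, ← div_eq_mul_inv,
    ← div_eq_mul_inv]
  have hA : 0 ≤ a / r := div_nonneg ha hr.le
  have hB : 0 ≤ b / s := div_nonneg hb hs.le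
  generalize a / r = A at hA ⊢
  generalize b / s = B at hB ⊢
  rcases (add_nonneg hA hB).eq_or_lt with h | h
  · -- `a = b = 0`: the right-hand side is `0 / 0 = 0`
    obtain ⟨rfl, rfl⟩ : A = 0 ∧ B = 0 := ⟨by linarith, by linarith⟩
    simp
  · field_simp
    ring

end RandomVariable

end ProbabilityTheory

lemma forall_mul_add_mul_le_iff {x y : ℝ} (hx : 0 ≤ x) :
    (∀ A B : ℝ, 0 ≤ A → 0 ≤ B → A * x + B * y ≤ (A ^ 2 + A * B + B ^ 2) / (A + B)) ↔
      x ≤ 1 ∧ y ≤ √(1 - x) * (2 - √(1 - x)) := by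
  refine ⟨fun h => ?_, fun ⟨hx1, hy⟩ => ?_⟩
  · have hx1 : x ≤ 1 := by simpa using h 1 0 zero_le_one le_rfl
    refine ⟨hx1, ?_⟩
    have hc : √(1 - x) ^ 2 = 1 - x := sq_sqrt (by linarith)
    have hc0 : 0 ≤ √(1 - x) := sqrt_nonneg _
    generalize √(1 - x) = c at hc hc0 ⊢
    rcases hc0.eq_or_lt with hc0 | hc0
    · have hx1' : x = 1 := by rw [← hc0] at hc; linarith
      rw [← hc0, zero_mul]
      by_contra! hy
      have key := h y⁻¹ 1 (by positivity) zero_le_one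
      rw [hx1', le_div_iff₀ (by positivity)] at key
      nlinarith [mul_inv_cancel₀ hy.ne']
    · have := h (1 - c) c (by nlinarith) hc0.le
      rw [sub_add_cancel, div_one] at this
      nlinarith
  · intro A B hA hB
    have hc : √(1 - x) ^ 2 = 1 - x := sq_sqrt (by linarith)
    generalize √(1 - x) = c at hc hy
    rcases (add_nonneg hA hB).eq_or_lt with h | h
    · obtain ⟨rfl, rfl⟩ : A = 0 ∧ B = 0 := ⟨by linarith, by linarith⟩
      simp
    rw [le_div_iff₀ h, show x = 1 - c ^ 2 by linarith]
    -- the slack is `(B - c (A + B))² + B (A + B) (c (2 - c) - y)`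
    nlinarith [sq_nonneg (B - c * (A + B)), mul_le_mul_of_nonneg_left hy (mul_nonneg hB h.le)]

theorem stmt_16_general
    {Ω : Type} [MeasurableSpace Ω] (μ : Measure Ω) [IsProbabilityMeasure μ]
    (μ1 μ2 : ℝ) (hμ1 : 0 < μ1) (hμ2 : 0 < μ2)
    (C1 C2 : Ω → ℝ) (hC1m : Measurable C1) (hC2m : Measurable C2)
    (hC1 : μ.map C1 = expMeasure (1 / μ1))
    (hC2 : μ.map C2 = expMeasure (1 / μ2))
    (hind : IndepFun C1 C2 μ)
    (lam1 lam2 : ℝ) (hlam1 : 0 ≤ lam1) :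
    (∀ α1 α2 : ℝ, 0 ≤ α1 → 0 ≤ α2 →
        α1 * lam1 + α2 * lam2 ≤ ∫ ω, max (α1 * C1 ω) (α2 * C2 ω) ∂μ)
      ↔ (lam1 ≤ μ1 ∧
          lam2 ≤ μ2 * Real.sqrt (1 - lam1 / μ1) * (2 - Real.sqrt (1 - lam1 / μ1))) := by
  have hmean : ∀ α1 α2 : ℝ, 0 ≤ α1 → 0 ≤ α2 → ∫ ω, max (α1 * C1 ω) (α2 * C2 ω) ∂μ
      = ((α1 * μ1) ^ 2 + α1 * μ1 * (α2 * μ2) + (α2 * μ2) ^ 2) / (α1 * μ1 + α2 * μ2) := by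
    intro α1 α2 h1 h2
    simpa only [div_div_eq_mul_div, div_one] using hind.integral_max_const_mul_of_expMeasure
      ⟨hC1m.aemeasurable, hC1⟩ ⟨hC2m.aemeasurable, hC2⟩ (by positivity) (by positivity) h1 h2
  calc _ ↔ ∀ A B : ℝ, 0 ≤ A → 0 ≤ B →
        A * (lam1 / μ1) + B * (lam2 / μ2) ≤ (A ^ 2 + A * B + B ^ 2) / (A + B) := by
        refine ⟨fun h A B hA hB => ?_, fun h α1 α2 h1 h2 => ?_⟩
        · have := h (A / μ1) (B / μ2) (by positivity) (by positivity)
          rw [hmean _ _ (by positivity) (by positivity)] at this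
          convert this using 1 <;> field_simp
        · rw [hmean α1 α2 h1 h2]
          convert h (α1 * μ1) (α2 * μ2) (by positivity) (by positivity) using 1
          field_simp
    _ ↔ _ := forall_mul_add_mul_le_iff (div_nonneg hlam1 hμ1.le)
    _ ↔ _ := by rw [div_le_one hμ1, div_le_iff₀ hμ2, mul_comm _ μ2, mul_assoc]

/-- stability region of the two-queue one-server fluid MQMS system with
independent exponential channels: (λ₁, λ₂) ≥ 0 satisfies all weighted inequalities
α₁λ₁ + α₂λ₂ ≤ E[max(α₁C₁, α₂C₂)] iff λ₁ ≤ μ₁ and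
λ₂ ≤ μ₂·√(1 − λ₁/μ₁)·(2 − √(1 − λ₁/μ₁)). -/
theorem stmt_16
    {Ω : Type} [MeasurableSpace Ω] (μ : Measure Ω) [IsProbabilityMeasure μ]
    (μ1 μ2 : ℝ) (hμ1 : 0 < μ1) (hμ2 : 0 < μ2)
    (C1 C2 : Ω → ℝ) (hC1m : Measurable C1) (hC2m : Measurable C2)
    (hC1 : μ.map C1 = expMeasure (1 / μ1))
    (hC2 : μ.map C2 = expMeasure (1 / μ2))
    (hind : IndepFun C1 C2 μ)
    (lam1 lam2 : ℝ) (hlam1 : 0 ≤ lam1) (hlam2 : 0 ≤ lam2) :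
    (∀ α1 α2 : ℝ, 0 ≤ α1 → 0 ≤ α2 →
        α1 * lam1 + α2 * lam2 ≤ ∫ ω, max (α1 * C1 ω) (α2 * C2 ω) ∂μ)
      ↔ (lam1 ≤ μ1 ∧
          lam2 ≤ μ2 * Real.sqrt (1 - lam1 / μ1) * (2 - Real.sqrt (1 - lam1 / μ1))) :=
  stmt_16_general μ μ1 μ2 hμ1 hμ2 C1 C2 hC1m hC2m hC1 hC2 hind lam1 lam2 hlam1
end
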